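/- arXiv:2204.05032 — 5 statements merged into one kernel-verified Lean document; each statement's English description precedes it below -/
import Mathlib

section
/- If f : [0,∞) → ℝ is given by f(x) = ∫_{[0,∞)} Ω_d(xξ) dF(ξ) for some probability measure F on [0,∞), then the map (x, y) ↦ f(‖x − y‖) on ℝ^d × ℝ^d is a positive definite kernel, i.e., for all n, all points x₁,…,xₙ ∈ ℝ^d and all real coefficients c₁,…,cₙ, the sum ∑_{i,j} c_i c_j f(‖x_i − x_j‖) is nonnegative. -/
open MeasureTheory

/-- The Schoenberg kernel `Ω_d` via its power series
(equal to `E[exp(i x ⟨e₁, η⟩)]` with `η` uniform on the unit sphere of `ℝ^d`). -/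
noncomputable def Omega (d : ℕ) (x : ℝ) : ℝ :=
  ∑' n : ℕ, Real.Gamma ((d : ℝ) / 2) * (-(x ^ 2 / 4)) ^ n /
    (Real.Gamma ((d : ℝ) / 2 + n) * n.factorial)

open Real Set Metric
open scoped RealInnerProductSpace

noncomputable section
namespace Schoen
variable {d : ℕ}

/-- total-mass/normalizing constant -/
def SC (d : ℕ) : ℝ :=
  2 * Real.Gamma (1 / 2) * Real.Gamma (1 / 2) ^ (d - 1) / Real.Gamma ((d : ℝ) / 2)

/-- integral against volumeIoiPow -/
lemma P2 (m : ℕ) (f : ℝ → ℝ) :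
    ∫ r : Ioi (0:ℝ), f r ∂(Measure.volumeIoiPow m) = ∫ r in Ioi (0:ℝ), r ^ m * f r := by
  simp only [Measure.volumeIoiPow, ENNReal.ofReal]
  rw [integral_withDensity_eq_integral_smul
      ((measurable_subtype_coe.pow_const _).real_toNNReal),
    integral_subtype_comap measurableSet_Ioi fun a : ℝ ↦ Real.toNNReal (a ^ m) • f a,
    setIntegral_congr_fun measurableSet_Ioi (g := fun a : ℝ => a ^ m * f a)
      fun x hx ↦ ?_]
  rw [NNReal.smul_def, Real.coe_toNNReal _ (pow_nonneg hx.out.le _), smul_eq_mul]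

/-- polar decomposition of an integral over Euclidean space -/
lemma P1 (hd : 0 < d) (G : EuclideanSpace ℝ (Fin d) → ℝ) :
    ∫ x, G x = ∫ p : sphere (0 : EuclideanSpace ℝ (Fin d)) 1 × Ioi (0:ℝ),
      G (p.2.1 • (p.1 : EuclideanSpace ℝ (Fin d)))
      ∂(((volume : Measure (EuclideanSpace ℝ (Fin d))).toSphere).prod
          (Measure.volumeIoiPow (d - 1))) := by
  haveI : Nonempty (Fin d) := ⟨⟨0, hd⟩⟩
  haveI : Nontrivial (EuclideanSpace ℝ (Fin d)) := by
    refine ⟨0, EuclideanSpace.single ⟨0, hd⟩ (1:ℝ), fun h => ?_⟩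
    have := congrArg norm h
    simp [EuclideanSpace.norm_single] at this
  have hdim : Module.finrank ℝ (EuclideanSpace ℝ (Fin d)) = d := by
    simp [finrank_euclideanSpace]
  calc
    ∫ x, G x = ∫ x : ({(0)}ᶜ : Set (EuclideanSpace ℝ (Fin d))), G x.1
        ∂((volume : Measure (EuclideanSpace ℝ (Fin d))).comap (↑)) := by
      rw [integral_subtype_comap (measurableSet_singleton _).compl fun x ↦ G x,
        MeasureTheory.restrict_compl_singleton 0]
    _ = _ := by
      have hm : Measure.volumeIoiPow (d - 1) =
          Measure.volumeIoiPow (Module.finrank ℝ (EuclideanSpace ℝ (Fin d)) - 1) := by rw [hdim]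
      rw [hm]
      have hcomp : ∀ x : ({(0:EuclideanSpace ℝ (Fin d))}ᶜ : Set _),
          (fun p : sphere (0 : EuclideanSpace ℝ (Fin d)) 1 × Ioi (0:ℝ) =>
            G (p.2.1 • (p.1 : EuclideanSpace ℝ (Fin d))))
            (homeomorphUnitSphereProd (EuclideanSpace ℝ (Fin d)) x) = G x.1 := by
        intro x
        simp only [homeomorphUnitSphereProd_apply_fst_coe,
          homeomorphUnitSphereProd_apply_snd_coe]
        congr 1
        rw [smul_inv_smul₀ (norm_ne_zero_iff.2 x.2)]
      rw [← integral_congr_ae (Filter.Eventually.of_forall hcomp)]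
      exact (volume : Measure (EuclideanSpace ℝ (Fin d))).measurePreserving_homeomorphUnitSphereProd.integral_comp
        (Homeomorph.measurableEmbedding _)
        (fun p : sphere (0 : EuclideanSpace ℝ (Fin d)) 1 × Ioi (0:ℝ) =>
          G (p.2.1 • (p.1 : EuclideanSpace ℝ (Fin d))))

/-- half-line Gaussian-type moment -/
lemma Ik (k : ℕ) :
    ∫ r in Ioi (0:ℝ), r ^ k * Real.exp (-r ^ 2) = Real.Gamma (((k : ℝ) + 1) / 2) / 2 := by
  rw [setIntegral_congr_fun measurableSet_Ioi
      (g := fun x : ℝ => x ^ ((k : ℝ)) * Real.exp (-x ^ ((2:ℝ)))) (fun x hx => ?_)]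
  · rw [integral_rpow_mul_exp_neg_rpow two_pos (neg_one_lt_zero.trans_le (Nat.cast_nonneg k))]
    ring
  · simp [Real.rpow_natCast, Real.rpow_two]

/-- full-line even Gaussian moment -/
lemma Jm (m : ℕ) :
    ∫ x : ℝ, x ^ (2 * m) * Real.exp (-x ^ 2) = Real.Gamma ((m : ℝ) + 1 / 2) := by
  have h : ∀ x : ℝ, |x| ^ (2 * m) * Real.exp (-|x| ^ 2) = x ^ (2 * m) * Real.exp (-x ^ 2) := by
    intro x
    rw [pow_mul, pow_mul, sq_abs]
  calc
    ∫ x : ℝ, x ^ (2 * m) * Real.exp (-x ^ 2)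
        = ∫ x : ℝ, |x| ^ (2 * m) * Real.exp (-|x| ^ 2) := by simp_rw [h]
    _ = 2 * ∫ x in Ioi (0:ℝ), x ^ (2 * m) * Real.exp (-x ^ 2) :=
          integral_comp_abs (f := fun x => x ^ (2 * m) * Real.exp (-x ^ 2))
    _ = Real.Gamma ((m : ℝ) + 1 / 2) := by
          rw [Ik]
          rw [mul_div_cancel₀ _ (two_ne_zero)]
          congr 1
          push_cast
          ring

lemma gaussMomentPi (hd : 0 < d) (n : ℕ) :
    ∫ x : EuclideanSpace ℝ (Fin d), Real.exp (-‖x‖ ^ 2) * (x ⟨0, hd⟩) ^ (2 * n)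
      = Real.Gamma ((n : ℝ) + 1 / 2) * Real.Gamma (1 / 2) ^ (d - 1) := by
  set i0 : Fin d := ⟨0, hd⟩
  have key : ∫ x : EuclideanSpace ℝ (Fin d), Real.exp (-‖x‖ ^ 2) * (x i0) ^ (2 * n)
      = ∫ y : Fin d → ℝ, ∏ i, ((y i) ^ (2 * (if i = i0 then n else 0)) * Real.exp (-(y i) ^ 2)) := by
    rw [← ((EuclideanSpace.volume_preserving_symm_measurableEquiv_toLp (Fin d)).symm).integral_comp
      (MeasurableEquiv.measurableEmbedding _)
      (fun x : EuclideanSpace ℝ (Fin d) => Real.exp (-‖x‖ ^ 2) * (x i0) ^ (2 * n))]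
    refine integral_congr_ae (Filter.Eventually.of_forall fun y => ?_)
    have hcoord : ∀ i, ((MeasurableEquiv.toLp 2 (Fin d → ℝ)).symm.symm y) i = y i := fun i => rfl
    have hnorm : ‖(MeasurableEquiv.toLp 2 (Fin d → ℝ)).symm.symm y‖ ^ 2 = ∑ i, (y i) ^ 2 := by
      rw [PiLp.norm_sq_eq_of_L2]
      refine Finset.sum_congr rfl fun i _ => ?_
      rw [hcoord, Real.norm_eq_abs, sq_abs]
    simp only [hcoord, hnorm]
    rw [Finset.prod_mul_distrib, ← Real.exp_sum]
    have h1 : ∏ i, (y i) ^ (2 * (if i = i0 then n else 0)) = (y i0) ^ (2 * n) := by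
      rw [Finset.prod_eq_single i0 (fun i _ hi => by simp [hi]) (by simp)]
      simp
    rw [h1, ← Finset.sum_neg_distrib]
    ring
  rw [key, volume_pi, integral_fintype_prod_eq_prod (f := fun i (t : ℝ) =>
    t ^ (2 * (if i = i0 then n else 0)) * Real.exp (-t ^ 2))]
  rw [← Finset.mul_prod_erase Finset.univ _ (Finset.mem_univ i0)]
  simp only [if_pos rfl, if_true]
  rw [Jm n]
  congr 1
  have : ∀ i ∈ Finset.univ.erase i0,
      (∫ t : ℝ, t ^ (2 * (if i = i0 then n else 0)) * Real.exp (-t ^ 2)) = Real.Gamma (1/2) := by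
    intro i hi
    rw [if_neg (Finset.mem_erase.1 hi).1]
    rw [show (2 * 0 : ℕ) = 2 * 0 from rfl, Jm 0]
    norm_num
  rw [Finset.prod_congr rfl this, Finset.prod_const, Finset.card_erase_of_mem (Finset.mem_univ _),
    Finset.card_univ, Fintype.card_fin]

lemma moment (hd : 0 < d) (n : ℕ) :
    ∫ η : sphere (0 : EuclideanSpace ℝ (Fin d)) 1,
        ((η : EuclideanSpace ℝ (Fin d)) ⟨0, hd⟩) ^ (2 * n)
        ∂((volume : Measure (EuclideanSpace ℝ (Fin d))).toSphere)
      = 2 * Real.Gamma ((n : ℝ) + 1 / 2) * Real.Gamma (1 / 2) ^ (d - 1)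
          / Real.Gamma ((d : ℝ) / 2 + n) := by
  set i0 : Fin d := ⟨0, hd⟩
  have h1 := P1 hd (fun x => Real.exp (-‖x‖ ^ 2) * (x i0) ^ (2 * n))
  have h2 : ∀ p : sphere (0 : EuclideanSpace ℝ (Fin d)) 1 × Ioi (0:ℝ),
      Real.exp (-‖(p.2.1 • (p.1 : EuclideanSpace ℝ (Fin d)))‖ ^ 2)
        * ((p.2.1 • (p.1 : EuclideanSpace ℝ (Fin d))) i0) ^ (2 * n)
      = ((p.1 : EuclideanSpace ℝ (Fin d)) i0) ^ (2 * n)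
        * ((p.2 : ℝ) ^ (2 * n) * Real.exp (-(p.2 : ℝ) ^ 2)) := by
    rintro ⟨η, r⟩
    have hη : ‖(η : EuclideanSpace ℝ (Fin d))‖ = 1 := mem_sphere_zero_iff_norm.1 η.2
    have hnorm : ‖((r : ℝ) • (η : EuclideanSpace ℝ (Fin d)))‖ ^ 2 = (r : ℝ) ^ 2 := by
      rw [norm_smul, hη, Real.norm_eq_abs, mul_one, sq_abs]
    have hcoord : ((r : ℝ) • (η : EuclideanSpace ℝ (Fin d))) i0
        = (r : ℝ) * (η : EuclideanSpace ℝ (Fin d)) i0 := rfl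
    simp only [hnorm, hcoord]
    rw [mul_pow]
    ring
  rw [integral_congr_ae (Filter.Eventually.of_forall h2)] at h1
  rw [integral_prod_mul (f := fun η : sphere (0 : EuclideanSpace ℝ (Fin d)) 1 =>
      ((η : EuclideanSpace ℝ (Fin d)) i0) ^ (2 * n))
    (g := fun r : Ioi (0:ℝ) => (r : ℝ) ^ (2 * n) * Real.exp (-(r : ℝ) ^ 2))] at h1
  rw [P2 (d - 1) (fun t => t ^ (2 * n) * Real.exp (-t ^ 2))] at h1
  have h3 : ∫ r in Ioi (0:ℝ), r ^ (d - 1) * (r ^ (2 * n) * Real.exp (-r ^ 2))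
      = Real.Gamma ((d : ℝ) / 2 + n) / 2 := by
    have : ∀ r ∈ Ioi (0:ℝ), r ^ (d - 1) * (r ^ (2 * n) * Real.exp (-r ^ 2))
        = r ^ (d - 1 + 2 * n) * Real.exp (-r ^ 2) := by
      intro r _; rw [pow_add]; ring
    rw [setIntegral_congr_fun measurableSet_Ioi this, Ik]
    congr 1
    have : (d - 1 + 2 * n : ℕ) = (d + 2 * n) - 1 := by omega
    rw [this]
    have hcast : ((d + 2 * n - 1 : ℕ) : ℝ) = (d : ℝ) + 2 * n - 1 := by
      have : (1:ℕ) ≤ d + 2 * n := by omega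
      push_cast [Nat.cast_sub this]
      ring
    rw [hcast]
    ring
  rw [h3, gaussMomentPi hd n] at h1
  have hΓ : Real.Gamma ((d : ℝ) / 2 + n) ≠ 0 := by
    refine (Real.Gamma_pos_of_pos ?_).ne'
    have : (0:ℝ) < d := by exact_mod_cast hd
    positivity
  field_simp at h1 ⊢
  linarith [h1]

lemma gammaNatHalf (n : ℕ) :
    Real.Gamma ((n : ℝ) + 1 / 2) * (4 ^ n * (n.factorial : ℝ))
      = ((2 * n).factorial : ℝ) * Real.Gamma (1 / 2) := by
  induction n with
  | zero => simp
  | succ n ih =>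
    have harg : ((n : ℝ) + 1 / 2) ≠ 0 := by positivity
    have hG : Real.Gamma (((n : ℕ) + 1 : ℝ) + 1 / 2) = ((n : ℝ) + 1 / 2) * Real.Gamma ((n : ℝ) + 1 / 2) := by
      rw [show ((n : ℕ) + 1 : ℝ) + 1 / 2 = ((n : ℝ) + 1 / 2) + 1 by ring, Real.Gamma_add_one harg]
    have hfac : ((2 * (n + 1)).factorial : ℝ)
        = (2 * n + 2) * ((2 * n + 1) * ((2 * n).factorial : ℝ)) := by
      have : 2 * (n + 1) = (2 * n + 1) + 1 := by ring
      rw [this, Nat.factorial_succ, Nat.factorial_succ]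
      push_cast; ring
    have hfac2 : ((n + 1).factorial : ℝ) = (n + 1) * (n.factorial : ℝ) := by
      rw [Nat.factorial_succ]; push_cast; ring
    push_cast
    push_cast at hG
    rw [hG, hfac, hfac2]
    have : (4:ℝ) ^ (n + 1) = 4 * 4 ^ n := by ring
    rw [this]
    linear_combination (2 * (n:ℝ) + 2) * (2 * (n:ℝ) + 1) * ih

lemma gammaHalfPos : 0 < Real.Gamma (1 / 2) := Real.Gamma_pos_of_pos (by norm_num)

lemma gammaDPos (hd : 0 < d) : 0 < Real.Gamma ((d : ℝ) / 2) :=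
  Real.Gamma_pos_of_pos (by positivity)

lemma gammaDnPos (hd : 0 < d) (n : ℕ) : 0 < Real.Gamma ((d : ℝ) / 2 + n) := by
  have : (0:ℝ) < d := by exact_mod_cast hd
  exact Real.Gamma_pos_of_pos (by positivity)

lemma SCpos (hd : 0 < d) : 0 < SC d := by
  have h1 := gammaHalfPos
  have h2 := gammaDPos hd
  unfold SC
  positivity

lemma coord_bound (hd : 0 < d) (η : sphere (0 : EuclideanSpace ℝ (Fin d)) 1) :
    |(η : EuclideanSpace ℝ (Fin d)) ⟨0, hd⟩| ≤ 1 := by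
  have hη : ‖(η : EuclideanSpace ℝ (Fin d))‖ = 1 := mem_sphere_zero_iff_norm.1 η.2
  have h := abs_real_inner_le_norm (EuclideanSpace.single (⟨0, hd⟩ : Fin d) (1:ℝ))
    (η : EuclideanSpace ℝ (Fin d))
  simpa [EuclideanSpace.inner_single_left, EuclideanSpace.norm_single, hη] using h

lemma coord_continuous (hd : 0 < d) :
    Continuous fun η : sphere (0 : EuclideanSpace ℝ (Fin d)) 1 =>
      (η : EuclideanSpace ℝ (Fin d)) ⟨0, hd⟩ :=
  (EuclideanSpace.proj (𝕜 := ℝ) (⟨0, hd⟩ : Fin d)).continuous.comp continuous_subtype_val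

lemma cosInt (hd : 0 < d) (t : ℝ) :
    ∫ η : sphere (0 : EuclideanSpace ℝ (Fin d)) 1,
        Real.cos (t * (η : EuclideanSpace ℝ (Fin d)) ⟨0, hd⟩)
        ∂((volume : Measure (EuclideanSpace ℝ (Fin d))).toSphere)
      = SC d * Omega d t := by
  set i0 : Fin d := ⟨0, hd⟩
  set σ := (volume : Measure (EuclideanSpace ℝ (Fin d))).toSphere
  set f : ℕ → sphere (0 : EuclideanSpace ℝ (Fin d)) 1 → ℝ :=
    fun n η => (-1) ^ n * (t * (η : EuclideanSpace ℝ (Fin d)) i0) ^ (2 * n)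
      / ((2 * n).factorial : ℝ) with hf
  have hmeas : ∀ n, AEStronglyMeasurable (f n) σ := by
    intro n
    exact ((continuous_const.mul
      (((continuous_const.mul (coord_continuous hd)).pow (2 * n)))).div_const _).aestronglyMeasurable
  have hb_nonneg : ∀ n : ℕ, (0:ℝ) ≤ |t| ^ (2 * n) / ((2 * n).factorial : ℝ) := by
    intro n; positivity
  have hb_sum : Summable (fun n : ℕ => |t| ^ (2 * n) / ((2 * n).factorial : ℝ)) := by
    have h := Real.summable_pow_div_factorial |t|
    exact h.comp_injective (mul_right_injective₀ (two_ne_zero))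
  have hptbound : ∀ n (η : sphere (0 : EuclideanSpace ℝ (Fin d)) 1),
      ‖f n η‖ ≤ |t| ^ (2 * n) / ((2 * n).factorial : ℝ) := by
    intro n η
    rw [hf]
    simp only [Real.norm_eq_abs]
    rw [abs_div, abs_mul, abs_pow, abs_pow, abs_neg, abs_one, one_pow, one_mul, abs_mul,
      Nat.abs_cast]
    apply div_le_div_of_nonneg_right ?_ ?_ |>.trans_eq rfl
    · exact pow_le_pow_left₀ (by positivity) (by
        calc |t| * |(η : EuclideanSpace ℝ (Fin d)) i0| ≤ |t| * 1 :=
          mul_le_mul_of_nonneg_left (coord_bound hd η) (abs_nonneg t)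
        _ = |t| := mul_one _) _
    · exact_mod_cast (Nat.factorial_pos (2*n)).le
  have hkey : ∑' n, ∫⁻ η, ‖f n η‖₊ ∂σ ≠ ⊤ := by
    have hle : ∀ n, ∫⁻ η, ‖f n η‖₊ ∂σ
        ≤ ENNReal.ofReal (|t| ^ (2 * n) / ((2 * n).factorial : ℝ)) * σ univ := by
      intro n
      calc ∫⁻ η, ‖f n η‖₊ ∂σ
          ≤ ∫⁻ _, ENNReal.ofReal (|t| ^ (2 * n) / ((2 * n).factorial : ℝ)) ∂σ := by
            refine lintegral_mono fun η => ?_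
            rw [← enorm_eq_nnnorm, ← ofReal_norm]
            exact ENNReal.ofReal_le_ofReal (hptbound n η)
        _ = ENNReal.ofReal (|t| ^ (2 * n) / ((2 * n).factorial : ℝ)) * σ univ := by
            rw [lintegral_const]
    refine ne_top_of_le_ne_top ?_ (ENNReal.tsum_le_tsum hle)
    rw [ENNReal.tsum_mul_right, ← ENNReal.ofReal_tsum_of_nonneg hb_nonneg hb_sum]
    exact ENNReal.mul_ne_top ENNReal.ofReal_ne_top (measure_ne_top σ univ)
  have hswap : ∫ η, Real.cos (t * (η : EuclideanSpace ℝ (Fin d)) i0) ∂σ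
      = ∑' n, ∫ η, f n η ∂σ := by
    rw [← integral_tsum hmeas hkey]
    exact integral_congr_ae (Filter.Eventually.of_forall fun η => Real.cos_eq_tsum _)
  rw [hswap]
  have hterm : ∀ n, ∫ η, f n η ∂σ
      = ((-1) ^ n * t ^ (2 * n) / ((2 * n).factorial : ℝ))
        * (2 * Real.Gamma ((n : ℝ) + 1 / 2) * Real.Gamma (1 / 2) ^ (d - 1)
            / Real.Gamma ((d : ℝ) / 2 + n)) := by
    intro n
    have : ∀ η : sphere (0 : EuclideanSpace ℝ (Fin d)) 1,
        f n η = ((-1) ^ n * t ^ (2 * n) / ((2 * n).factorial : ℝ))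
          * ((η : EuclideanSpace ℝ (Fin d)) i0) ^ (2 * n) := by
      intro η; simp only [hf]; rw [mul_pow]; ring
    rw [integral_congr_ae (Filter.Eventually.of_forall this), integral_const_mul, moment hd n]
  rw [tsum_congr hterm, Omega, ← tsum_mul_left]
  refine tsum_congr fun n => ?_
  have hneg : (-(t ^ 2 / 4)) ^ n = (-1) ^ n * t ^ (2 * n) / 4 ^ n := by
    rw [neg_pow, div_pow, pow_mul]
    ring
  have h1 : Real.Gamma ((d : ℝ) / 2) ≠ 0 := (gammaDPos hd).ne'
  have h2 : Real.Gamma ((d : ℝ) / 2 + n) ≠ 0 := (gammaDnPos hd n).ne'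
  have h3 : ((2 * n).factorial : ℝ) ≠ 0 := by exact_mod_cast (Nat.factorial_pos _).ne'
  have h4 : ((n.factorial : ℝ)) ≠ 0 := by exact_mod_cast (Nat.factorial_pos _).ne'
  have h5 : (4 : ℝ) ^ n ≠ 0 := by positivity
  have hGn := gammaNatHalf n
  rw [SC, hneg]
  generalize Real.Gamma ((d : ℝ) / 2 + (n:ℝ)) = C at h2 ⊢
  generalize hA : Real.Gamma ((1:ℝ) / 2) = A at hGn ⊢
  generalize Real.Gamma ((d : ℝ) / 2) = B at h1 ⊢
  generalize hGg : Real.Gamma ((n:ℝ) + 1 / 2) = Gn at hGn ⊢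
  have h45 : (4:ℝ) ^ n * (n.factorial : ℝ) ≠ 0 := by positivity
  have hGn' : Gn = ((2 * n).factorial : ℝ) * A / (4 ^ n * (n.factorial : ℝ)) := by
    field_simp
    linarith [hGn]
  rw [hGn']
  field_simp

/-- radial representation of sphere integrals -/
lemma radial (hd : 0 < d) (g : EuclideanSpace ℝ (Fin d) → ℝ) :
    ∫ x : EuclideanSpace ℝ (Fin d), Real.exp (-‖x‖ ^ 2) * g (‖x‖⁻¹ • x)
      = (Real.Gamma ((d : ℝ) / 2) / 2) *
        ∫ η : sphere (0 : EuclideanSpace ℝ (Fin d)) 1, g η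
          ∂((volume : Measure (EuclideanSpace ℝ (Fin d))).toSphere) := by
  rw [P1 hd (fun x => Real.exp (-‖x‖ ^ 2) * g (‖x‖⁻¹ • x))]
  have h2 : ∀ p : sphere (0 : EuclideanSpace ℝ (Fin d)) 1 × Ioi (0:ℝ),
      Real.exp (-‖((p.2 : ℝ) • (p.1 : EuclideanSpace ℝ (Fin d)))‖ ^ 2)
        * g (‖((p.2 : ℝ) • (p.1 : EuclideanSpace ℝ (Fin d)))‖⁻¹
            • ((p.2 : ℝ) • (p.1 : EuclideanSpace ℝ (Fin d))))
      = g (p.1 : EuclideanSpace ℝ (Fin d)) * Real.exp (-(p.2 : ℝ) ^ 2) := by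
    rintro ⟨η, r⟩
    have hη : ‖(η : EuclideanSpace ℝ (Fin d))‖ = 1 := mem_sphere_zero_iff_norm.1 η.2
    have hr : (0:ℝ) < (r : ℝ) := r.2
    have hnorm : ‖((r : ℝ) • (η : EuclideanSpace ℝ (Fin d)))‖ = (r : ℝ) := by
      rw [norm_smul, hη, Real.norm_eq_abs, mul_one, abs_of_pos hr]
    rw [hnorm, inv_smul_smul₀ hr.ne']
    ring
  rw [integral_congr_ae (Filter.Eventually.of_forall h2),
    integral_prod_mul (f := fun η : sphere (0 : EuclideanSpace ℝ (Fin d)) 1 =>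
      g (η : EuclideanSpace ℝ (Fin d)))
      (g := fun r : Ioi (0:ℝ) => Real.exp (-(r : ℝ) ^ 2)),
    P2 (d - 1) (fun t => Real.exp (-t ^ 2))]
  have h3 : ∫ r in Ioi (0:ℝ), r ^ (d - 1) * Real.exp (-r ^ 2)
      = Real.Gamma ((d : ℝ) / 2) / 2 := by
    rw [Ik (d - 1)]
    congr 2
    have : ((d - 1 : ℕ) : ℝ) = (d : ℝ) - 1 := by
      push_cast [Nat.cast_sub hd]; ring
    rw [this]
    ring
  rw [h3]
  ring

/-- rotation invariance of the sphere integral -/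
lemma rotInv (hd : 0 < d) (g : EuclideanSpace ℝ (Fin d) → ℝ) (hgc : Continuous g)
    (T : EuclideanSpace ℝ (Fin d) ≃ₗᵢ[ℝ] EuclideanSpace ℝ (Fin d)) :
    ∫ η : sphere (0 : EuclideanSpace ℝ (Fin d)) 1, g (T (η : EuclideanSpace ℝ (Fin d)))
        ∂((volume : Measure (EuclideanSpace ℝ (Fin d))).toSphere)
      = ∫ η : sphere (0 : EuclideanSpace ℝ (Fin d)) 1, g (η : EuclideanSpace ℝ (Fin d))
        ∂((volume : Measure (EuclideanSpace ℝ (Fin d))).toSphere) := by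
  have hcomp : ∫ x : EuclideanSpace ℝ (Fin d), Real.exp (-‖x‖ ^ 2) * g (T (‖x‖⁻¹ • x))
      = ∫ x : EuclideanSpace ℝ (Fin d), Real.exp (-‖x‖ ^ 2) * g (‖x‖⁻¹ • x) := by
    have := (T.measurePreserving).integral_comp
      T.toHomeomorph.measurableEmbedding
      (fun x : EuclideanSpace ℝ (Fin d) => Real.exp (-‖x‖ ^ 2) * g (‖x‖⁻¹ • x))
    rw [← this]
    refine integral_congr_ae (Filter.Eventually.of_forall fun x => ?_)
    simp only [LinearIsometryEquiv.coe_toHomeomorph]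
    rw [T.norm_map, T.map_smul]
  have r1 := radial hd (fun w => g (T w))
  have r2 := radial hd g
  rw [hcomp, r2] at r1
  have hΓ : Real.Gamma ((d : ℝ) / 2) / 2 ≠ 0 := by
    have := gammaDPos hd; positivity
  exact mul_left_cancel₀ hΓ r1.symm

/-- the main representation : sphere average of cos of inner product -/
lemma sphereCos (hd : 0 < d) (v : EuclideanSpace ℝ (Fin d)) :
    ∫ η : sphere (0 : EuclideanSpace ℝ (Fin d)) 1, Real.cos ⟪v, (η : EuclideanSpace ℝ (Fin d))⟫
        ∂((volume : Measure (EuclideanSpace ℝ (Fin d))).toSphere)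
      = SC d * Omega d ‖v‖ := by
  set e1 : EuclideanSpace ℝ (Fin d) := EuclideanSpace.single ⟨0, hd⟩ (1:ℝ) with he1
  set w : EuclideanSpace ℝ (Fin d) := ‖v‖ • e1 with hw
  have hnw : ‖w‖ = ‖v‖ := by
    rw [hw, norm_smul, he1, EuclideanSpace.norm_single, norm_one, mul_one, norm_norm]
  set T : EuclideanSpace ℝ (Fin d) ≃ₗᵢ[ℝ] EuclideanSpace ℝ (Fin d) :=
    Submodule.reflection (ℝ ∙ (w - v))ᗮ with hT
  have hTw : T w = v := Submodule.reflection_sub hnw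
  have hinv := rotInv hd (fun u => Real.cos ⟪v, u⟫)
    (Real.continuous_cos.comp (continuous_const.inner continuous_id)) T
  rw [← hinv]
  have hpt : ∀ η : sphere (0 : EuclideanSpace ℝ (Fin d)) 1,
      Real.cos ⟪v, T (η : EuclideanSpace ℝ (Fin d))⟫
        = Real.cos (‖v‖ * (η : EuclideanSpace ℝ (Fin d)) ⟨0, hd⟩) := by
    intro η
    congr 1
    calc ⟪v, T (η : EuclideanSpace ℝ (Fin d))⟫
        = ⟪T w, T (η : EuclideanSpace ℝ (Fin d))⟫ := by rw [hTw]
      _ = ⟪w, (η : EuclideanSpace ℝ (Fin d))⟫ := T.inner_map_map _ _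
      _ = ‖v‖ * ⟪e1, (η : EuclideanSpace ℝ (Fin d))⟫ := by rw [hw, real_inner_smul_left]
      _ = ‖v‖ * (η : EuclideanSpace ℝ (Fin d)) ⟨0, hd⟩ := by
          rw [he1, EuclideanSpace.inner_single_left]
          simp
  rw [integral_congr_ae (Filter.Eventually.of_forall hpt), cosInt hd]

lemma totalMass (hd : 0 < d) :
    ∫ η : sphere (0 : EuclideanSpace ℝ (Fin d)) 1, (1:ℝ)
      ∂((volume : Measure (EuclideanSpace ℝ (Fin d))).toSphere) = SC d := by
  have h := moment hd 0
  simp only [mul_zero, pow_zero, Nat.cast_zero, zero_add] at h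
  rw [h, SC]
  norm_num

lemma omega_eq (hd : 0 < d) (t : ℝ) :
    Omega d t = (SC d)⁻¹ *
      ∫ η : sphere (0 : EuclideanSpace ℝ (Fin d)) 1,
        Real.cos (t * (η : EuclideanSpace ℝ (Fin d)) ⟨0, hd⟩)
        ∂((volume : Measure (EuclideanSpace ℝ (Fin d))).toSphere) := by
  rw [cosInt hd t, ← mul_assoc, inv_mul_cancel₀ (SCpos hd).ne', one_mul]

lemma omega_cont (hd : 0 < d) : Continuous (Omega d) := by
  have h : Continuous fun t : ℝ =>
      ∫ η : sphere (0 : EuclideanSpace ℝ (Fin d)) 1,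
        Real.cos (t * (η : EuclideanSpace ℝ (Fin d)) ⟨0, hd⟩)
        ∂((volume : Measure (EuclideanSpace ℝ (Fin d))).toSphere) := by
    refine continuous_of_dominated (bound := fun _ => (1:ℝ)) ?_ ?_ (integrable_const 1) ?_
    · intro t
      exact (Real.continuous_cos.comp
        (continuous_const.mul (coord_continuous hd))).aestronglyMeasurable
    · intro t
      exact Filter.Eventually.of_forall fun η => by
        rw [Real.norm_eq_abs]; exact Real.abs_cos_le_one _
    · exact Filter.Eventually.of_forall fun η =>
        Real.continuous_cos.comp (continuous_mul_right _)
  have : Omega d = fun t => (SC d)⁻¹ *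
      ∫ η : sphere (0 : EuclideanSpace ℝ (Fin d)) 1,
        Real.cos (t * (η : EuclideanSpace ℝ (Fin d)) ⟨0, hd⟩)
        ∂((volume : Measure (EuclideanSpace ℝ (Fin d))).toSphere) :=
    funext fun t => omega_eq hd t
  rw [this]
  exact continuous_const.mul h

lemma omega_bound (hd : 0 < d) (t : ℝ) : |Omega d t| ≤ 1 := by
  set σ := (volume : Measure (EuclideanSpace ℝ (Fin d))).toSphere
  have hintcos : Integrable (fun η : sphere (0 : EuclideanSpace ℝ (Fin d)) 1 =>
      Real.cos (t * (η : EuclideanSpace ℝ (Fin d)) ⟨0, hd⟩)) σ := by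
    refine Integrable.mono' (integrable_const 1) ((Real.continuous_cos.comp
      (continuous_const.mul (coord_continuous hd))).aestronglyMeasurable) ?_
    exact Filter.Eventually.of_forall fun η => by
      rw [Real.norm_eq_abs]; exact Real.abs_cos_le_one _
  have h1 : |∫ η, Real.cos (t * (η : EuclideanSpace ℝ (Fin d)) ⟨0, hd⟩) ∂σ| ≤ SC d := by
    rw [← totalMass hd]
    calc |∫ η, Real.cos (t * (η : EuclideanSpace ℝ (Fin d)) ⟨0, hd⟩) ∂σ|
        ≤ ∫ η, |Real.cos (t * (η : EuclideanSpace ℝ (Fin d)) ⟨0, hd⟩)| ∂σ := by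
          have := norm_integral_le_integral_norm (μ := σ)
            (f := fun η : sphere (0 : EuclideanSpace ℝ (Fin d)) 1 =>
              Real.cos (t * (η : EuclideanSpace ℝ (Fin d)) ⟨0, hd⟩))
          simpa [Real.norm_eq_abs] using this
      _ ≤ ∫ _η, (1:ℝ) ∂σ := by
          refine integral_mono hintcos.abs (integrable_const 1) fun η => ?_
          exact Real.abs_cos_le_one _
  rw [omega_eq hd t, abs_mul, abs_inv, abs_of_pos (SCpos hd)]
  calc (SC d)⁻¹ * |∫ η, Real.cos (t * (η : EuclideanSpace ℝ (Fin d)) ⟨0, hd⟩) ∂σ|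
      ≤ (SC d)⁻¹ * SC d := by
        exact mul_le_mul_of_nonneg_left h1 (inv_nonneg.2 (SCpos hd).le)
    _ = 1 := inv_mul_cancel₀ (SCpos hd).ne'

lemma sumPD (hd : 0 < d) (m : ℕ) (v : Fin m → EuclideanSpace ℝ (Fin d)) (c : Fin m → ℝ) :
    0 ≤ ∑ i, ∑ j, c i * c j * Omega d ‖v i - v j‖ := by
  set σ := (volume : Measure (EuclideanSpace ℝ (Fin d))).toSphere
  set q : Fin m → Fin m → sphere (0 : EuclideanSpace ℝ (Fin d)) 1 → ℝ :=
    fun i j η => c i * c j * Real.cos (⟪v i, (η : EuclideanSpace ℝ (Fin d))⟫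
      - ⟪v j, (η : EuclideanSpace ℝ (Fin d))⟫) with hq
  have hcont : ∀ u : EuclideanSpace ℝ (Fin d),
      Continuous fun η : sphere (0 : EuclideanSpace ℝ (Fin d)) 1 =>
        ⟪u, (η : EuclideanSpace ℝ (Fin d))⟫ := fun u =>
    (continuous_const.inner continuous_id).comp continuous_subtype_val
  have hqint : ∀ i j, Integrable (q i j) σ := by
    intro i j
    refine Integrable.mono' (integrable_const (|c i * c j|))
      (continuous_const.mul
        (Real.continuous_cos.comp ((hcont (v i)).sub (hcont (v j))))).aestronglyMeasurable ?_
    refine Filter.Eventually.of_forall fun η => ?_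
    rw [Real.norm_eq_abs, hq]
    simp only []
    rw [abs_mul]
    exact mul_le_of_le_one_right (abs_nonneg _) (Real.abs_cos_le_one _)
  have hrep : ∀ i j, c i * c j * Omega d ‖v i - v j‖ = (SC d)⁻¹ * ∫ η, q i j η ∂σ := by
    intro i j
    have h1 := sphereCos hd (v i - v j)
    have h2 : ∀ η : sphere (0 : EuclideanSpace ℝ (Fin d)) 1,
        Real.cos ⟪v i - v j, (η : EuclideanSpace ℝ (Fin d))⟫
        = Real.cos (⟪v i, (η : EuclideanSpace ℝ (Fin d))⟫
          - ⟪v j, (η : EuclideanSpace ℝ (Fin d))⟫) := by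
      intro η; rw [inner_sub_left]
    rw [integral_congr_ae (Filter.Eventually.of_forall h2)] at h1
    rw [hq]
    simp only []
    rw [integral_const_mul, h1]
    have hS := (SCpos hd).ne'
    field_simp
  calc (0:ℝ) ≤ (SC d)⁻¹ * ∫ η, ∑ i, ∑ j, q i j η ∂σ := by
        refine mul_nonneg (inv_nonneg.2 (SCpos hd).le) (integral_nonneg fun η => ?_)
        have hsq : ∀ (a : Fin m → ℝ), ∑ i, ∑ j, c i * c j * Real.cos (a i - a j)
            = (∑ i, c i * Real.cos (a i))^2 + (∑ i, c i * Real.sin (a i))^2 := by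
          intro a
          rw [sq, sq, Finset.sum_mul_sum, Finset.sum_mul_sum, ← Finset.sum_add_distrib]
          refine Finset.sum_congr rfl fun i _ => ?_
          rw [← Finset.sum_add_distrib]
          refine Finset.sum_congr rfl fun j _ => ?_
          rw [Real.cos_sub]; ring
        have := hsq (fun i => ⟪v i, (η : EuclideanSpace ℝ (Fin d))⟫)
        rw [hq]; simp only []
        rw [this]
        positivity
    _ = ∑ i, ∑ j, c i * c j * Omega d ‖v i - v j‖ := by
        rw [integral_finset_sum _ (fun i _ => integrable_finset_sum _ (fun j _ => hqint i j))]
        rw [Finset.mul_sum]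
        refine Finset.sum_congr rfl fun i _ => ?_
        rw [integral_finset_sum _ (fun j _ => hqint i j), Finset.mul_sum]
        refine Finset.sum_congr rfl fun j _ => (hrep i j).symm

end Schoen
end

open Schoen in
theorem stmt2 (d : ℕ) (hd : 0 < d) (F : Measure ℝ) [IsProbabilityMeasure F]
    (hF : F (Set.Iio 0) = 0) (f : ℝ → ℝ)
    (hf : ∀ x, f x = ∫ ξ, Omega d (x * ξ) ∂F) :
    ∀ (n : ℕ) (x : Fin n → EuclideanSpace ℝ (Fin d)) (c : Fin n → ℝ),
      0 ≤ ∑ i, ∑ j, c i * c j * f (dist (x i) (x j)) := by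
  intro n x c
  have hOint : ∀ (a : ℝ), Integrable (fun ξ => Omega d (a * ξ)) F := by
    intro a
    refine Integrable.mono' (integrable_const 1)
      ((omega_cont hd).comp (continuous_const.mul continuous_id)).aestronglyMeasurable ?_
    exact Filter.Eventually.of_forall fun ξ => by
      rw [Real.norm_eq_abs]; exact omega_bound hd _
  have key : ∀ ξ : ℝ, 0 ≤ ξ →
      0 ≤ ∑ i, ∑ j, c i * c j * Omega d (dist (x i) (x j) * ξ) := by
    intro ξ hξ
    have hdist : ∀ i j : Fin n, dist (x i) (x j) * ξ = ‖ξ • x i - ξ • x j‖ := by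
      intro i j
      rw [dist_eq_norm, ← smul_sub, norm_smul, Real.norm_eq_abs, abs_of_nonneg hξ]
      ring
    simp_rw [hdist]
    exact sumPD hd n (fun i => ξ • x i) c
  have hswap : ∑ i, ∑ j, c i * c j * f (dist (x i) (x j))
      = ∫ ξ, ∑ i, ∑ j, c i * c j * Omega d (dist (x i) (x j) * ξ) ∂F := by
    rw [integral_finset_sum _ (fun i _ => integrable_finset_sum _
      (fun j _ => (hOint (dist (x i) (x j))).const_mul (c i * c j)))]
    refine Finset.sum_congr rfl fun i _ => ?_
    rw [integral_finset_sum _ (fun j _ => (hOint (dist (x i) (x j))).const_mul (c i * c j))]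
    refine Finset.sum_congr rfl fun j _ => ?_
    rw [hf (dist (x i) (x j)), integral_const_mul]
  rw [hswap]
  refine integral_nonneg_of_ae ?_
  have hae : ∀ᵐ ξ ∂F, 0 ≤ ξ := by
    rw [ae_iff]
    convert hF using 2
    ext ξ
    simp [not_le]
  filter_upwards [hae] with ξ hξ using key ξ hξ
end

section
/- Let {b_n(·)}_{n≥0} be functions b_n : [0,∞) → ℝ such that each kernel (u,v) ↦ b_n(‖u−v‖) is positive definite on ℝ^d × ℝ^d, and ∑_{n=0}^∞ b_n(0) = 1 with all b_n(0) ≥ 0. Then ψ(x,θ) := ∑_{n=0}^∞ b_n(x) · G_n^{(d'-1)/2}(cos θ)/G_n^{(d'-1)/2}(1) defines a positive definite kernel ((u,ξ),(v,η)) ↦ ψ(‖u−v‖, arccos⟨ξ,η⟩) on (ℝ^d × S^{d'})², for d' ≥ 2, and ψ(0,0) = 1. -/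
open scoped RealInnerProductSpace

/-- The Gegenbauer polynomial `G_n^λ` via the standard recurrence. -/
noncomputable def gegenbauer (lam : ℝ) : ℕ → ℝ → ℝ
  | 0, _ => 1
  | 1, x => 2 * lam * x
  | (n + 2), x =>
      (2 * ((n : ℝ) + 1 + lam) * x * gegenbauer lam (n + 1) x
        - ((n : ℝ) + 2 * lam) * gegenbauer lam n x) / ((n : ℝ) + 2)


namespace Geg

def poch (x : ℝ) : ℕ → ℝ
  | 0 => 1
  | n + 1 => poch x n * (x + n)

lemma poch_succ (x : ℝ) (n : ℕ) : poch x (n+1) = poch x n * (x + n) := rfl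

lemma poch_pos {x : ℝ} (hx : 0 < x) : ∀ n, 0 < poch x n
  | 0 => one_pos
  | n + 1 => mul_pos (poch_pos hx n) (by positivity)

noncomputable def a (lam : ℝ) (n k : ℕ) : ℝ :=
  if 2 * k ≤ n then
    (-1) ^ k * 2 ^ (n - 2 * k) * poch lam (n - k) /
      ((k.factorial : ℝ) * ((n - 2 * k).factorial : ℝ))
  else 0

lemma a_of_gt {lam : ℝ} {n k : ℕ} (h : n < 2 * k) : a lam n k = 0 := by
  simp [a, Nat.not_le.2 h]

lemma fact_cast_pos (n : ℕ) : (0:ℝ) < (n.factorial : ℝ) := by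
  exact_mod_cast n.factorial_pos

lemma key (lam : ℝ) (n k : ℕ) :
    ((n:ℝ) + 2) * a lam (n+2) k
      = 2 * ((n:ℝ) + 1 + lam) * a lam (n+1) k
        - ((n:ℝ) + 2*lam) * (if k = 0 then 0 else a lam n (k-1)) := by
  rcases Nat.eq_zero_or_pos k with rfl | hk
  · -- k = 0
    simp only [a, Nat.mul_zero, Nat.zero_le, if_true, Nat.sub_zero, Nat.factorial_zero,
      Nat.cast_one, pow_zero, one_mul, mul_zero, sub_zero]
    rw [poch_succ lam (n+1)]
    have h1 : (n+2).factorial = (n+2) * (n+1).factorial := rfl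
    rw [h1]
    have := fact_cast_pos (n+1)
    push_cast
    field_simp
    ring
  · obtain ⟨k', rfl⟩ : ∃ k', k = k' + 1 := ⟨k - 1, by omega⟩
    rw [if_neg (by omega)]
    rcases le_or_gt (2*(k'+1)) n with hA | hA
    · -- full in-range case
      obtain ⟨m, rfl⟩ : ∃ m, n = m + 2*(k'+1) := ⟨n - 2*(k'+1), by omega⟩
      have e1 : m + 2*(k'+1) + 2 - 2*(k'+1) = m + 2 := by omega
      have e2 : m + 2*(k'+1) + 2 - (k'+1) = m + k' + 3 := by omega
      have e3 : m + 2*(k'+1) + 1 - 2*(k'+1) = m + 1 := by omega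
      have e4 : m + 2*(k'+1) + 1 - (k'+1) = m + k' + 2 := by omega
      have e5 : m + 2*(k'+1) - 2*k' = m + 2 := by omega
      have e6 : m + 2*(k'+1) - k' = m + k' + 2 := by omega
      have g1 : 2*(k'+1) ≤ m + 2*(k'+1) + 2 := by omega
      have g2 : 2*(k'+1) ≤ m + 2*(k'+1) + 1 := by omega
      have g3 : 2*k' ≤ m + 2*(k'+1) := by omega
      simp only [a, Nat.add_sub_cancel, if_pos g1, if_pos g2, if_pos g3, e1, e2, e3, e4, e5, e6]
      rw [poch_succ lam (m+k'+2)]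
      have f1 : (m+2).factorial = (m+2) * ((m+1) * m.factorial) := rfl
      have f2 : (m+1).factorial = (m+1) * m.factorial := rfl
      have f3 : (k'+1).factorial = (k'+1) * k'.factorial := rfl
      rw [f1, f2, f3]
      have h1 := fact_cast_pos m
      have h2 := fact_cast_pos k'
      push_cast
      field_simp
      ring
    · rcases le_or_gt (2*(k'+1)) (n+1) with hB | hB
      · -- 2k = n+1 case, n = 2k'+1
        obtain rfl : n = 2*k'+1 := by omega
        have g1 : 2*(k'+1) ≤ 2*k'+1 + 2 := by omega
        have g2 : 2*(k'+1) ≤ 2*k'+1 + 1 := by omega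
        have g3 : 2*k' ≤ 2*k'+1 := by omega
        have e1 : 2*k'+1 + 2 - 2*(k'+1) = 1 := by omega
        have e2 : 2*k'+1 + 2 - (k'+1) = k' + 2 := by omega
        have e3 : 2*k'+1 + 1 - 2*(k'+1) = 0 := by omega
        have e4 : 2*k'+1 + 1 - (k'+1) = k' + 1 := by omega
        have e5 : 2*k'+1 - 2*k' = 1 := by omega
        have e6 : 2*k'+1 - k' = k' + 1 := by omega
        simp only [a, Nat.add_sub_cancel, if_pos g1, if_pos g2, if_pos g3, e1, e2, e3, e4, e5, e6]
        rw [poch_succ lam (k'+1)]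
        have f3 : (k'+1).factorial = (k'+1) * k'.factorial := rfl
        rw [f3]
        have h2 := fact_cast_pos k'
        push_cast
        field_simp
        ring
      · rcases le_or_gt (2*(k'+1)) (n+2) with hC | hC
        · -- 2k = n+2, n = 2k'
          obtain rfl : n = 2*k' := by omega
          have g1 : 2*(k'+1) ≤ 2*k' + 2 := by omega
          have g3 : 2*k' ≤ 2*k' := le_refl _
          have z2 : a lam (2*k'+1) (k'+1) = 0 := a_of_gt (by omega)
          rw [z2]
          have e1 : 2*k' + 2 - 2*(k'+1) = 0 := by omega
          have e2 : 2*k' + 2 - (k'+1) = k' + 1 := by omega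
          have e5 : 2*k' - 2*k' = 0 := by omega
          have e6 : 2*k' - k' = k' := by omega
          simp only [a, Nat.add_sub_cancel, if_pos g1, if_pos g3, e1, e2, e5, e6]
          rw [poch_succ lam k']
          have f3 : (k'+1).factorial = (k'+1) * k'.factorial := rfl
          rw [f3]
          have h2 := fact_cast_pos k'
          push_cast
          field_simp
          ring
        · -- all zero
          have z1 : a lam (n+2) (k'+1) = 0 := a_of_gt (by omega)
          have z2 : a lam (n+1) (k'+1) = 0 := a_of_gt (by omega)
          have z3 : a lam n k' = 0 := a_of_gt (by omega)
          rw [z1, z2, show k'+1-1 = k' from rfl, z3]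
          ring

lemma gegenbauer_eq_sum (lam : ℝ) :
    ∀ n x, gegenbauer lam n x = ∑ k ∈ Finset.range (n+1), a lam n k * x ^ (n - 2*k) := by
  intro n
  induction n using Nat.twoStepInduction with
  | zero => intro x; simp [gegenbauer, a, poch]
  | one =>
    intro x
    simp [gegenbauer, a, Finset.sum_range_succ, poch]
  | more n ih2 ih1 =>
    intro x
    have hne : ((n:ℝ) + 2) ≠ 0 := by positivity
    show (2 * ((n : ℝ) + 1 + lam) * x * gegenbauer lam (n + 1) x
        - ((n : ℝ) + 2 * lam) * gegenbauer lam n x) / ((n : ℝ) + 2) = _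
    rw [div_eq_iff hne, ih1, ih2]
    have T1 : x * (∑ k ∈ Finset.range (n+1+1), a lam (n+1) k * x ^ (n+1 - 2*k))
        = ∑ k ∈ Finset.range (n+3), a lam (n+1) k * x ^ (n+2 - 2*k) := by
      rw [Finset.mul_sum, show n + 3 = (n+2) + 1 from rfl,
        Finset.sum_range_succ (fun k => a lam (n+1) k * x ^ (n+2 - 2*k)) (n+2)]
      have z : a lam (n+1) (n+2) = 0 := a_of_gt (by omega)
      rw [z, zero_mul, add_zero]
      apply Finset.sum_congr rfl
      intro k hk
      rcases le_or_gt (2*k) (n+1) with h2 | h2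
      · have : n + 2 - 2*k = (n + 1 - 2*k) + 1 := by omega
        rw [this, pow_succ]
        ring
      · have z2 : a lam (n+1) k = 0 := a_of_gt h2
        rw [z2]
        ring
    have T2 : (∑ k ∈ Finset.range (n+1), a lam n k * x ^ (n - 2*k))
        = ∑ k ∈ Finset.range (n+3), (if k = 0 then 0 else a lam n (k-1)) * x ^ (n+2 - 2*k) := by
      rw [show n + 3 = (n+2) + 1 from rfl,
        Finset.sum_range_succ' (fun k => (if k = 0 then 0 else a lam n (k-1)) * x ^ (n+2 - 2*k)) (n+2)]
      simp only [Nat.succ_ne_zero, if_false, Nat.add_sub_cancel]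
      rw [show n + 2 = (n+1) + 1 from rfl,
        Finset.sum_range_succ (fun k => a lam n k * x ^ (n+1+1 - 2*(k+1))) (n+1)]
      have z : a lam n (n+1) = 0 := a_of_gt (by omega)
      rw [z]
      simp only [if_true, eq_self_iff_true, zero_mul, add_zero]
      apply Finset.sum_congr rfl
      intro k hk
      rcases le_or_gt (2*k) n with h | h
      · have : n + 1 + 1 - 2*(k+1) = n - 2*k := by omega
        rw [this]
      · have z2 : a lam n k = 0 := a_of_gt h
        rw [z2]
        ring
    rw [mul_assoc (2*((n:ℝ)+1+lam)) x]
    rw [T1, T2, Finset.mul_sum, Finset.mul_sum, Finset.sum_mul, ← Finset.sum_sub_distrib]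
    apply Finset.sum_congr rfl
    intro k hk
    have := key lam n k
    calc 2 * ((n:ℝ) + 1 + lam) * (a lam (n+1) k * x ^ (n+2-2*k))
          - ((n:ℝ) + 2*lam) * ((if k = 0 then 0 else a lam n (k-1)) * x ^ (n+2-2*k))
        = (2 * ((n:ℝ) + 1 + lam) * a lam (n+1) k
            - ((n:ℝ) + 2*lam) * (if k = 0 then 0 else a lam n (k-1))) * x ^ (n+2-2*k) := by ring
      _ = (((n:ℝ)+2) * a lam (n+2) k) * x ^ (n+2-2*k) := by rw [← this]
      _ = a lam (n+2) k * x ^ (n+2-2*k) * ((n:ℝ)+2) := by ring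

lemma gegenbauer_one (lam : ℝ) :
    ∀ n, gegenbauer lam n 1 = poch (2*lam) n / (n.factorial : ℝ) := by
  intro n
  induction n using Nat.twoStepInduction with
  | zero => simp [gegenbauer, poch]
  | one => simp [gegenbauer, poch]
  | more n ih2 ih1 =>
    show (2 * ((n : ℝ) + 1 + lam) * 1 * gegenbauer lam (n + 1) 1
        - ((n : ℝ) + 2 * lam) * gegenbauer lam n 1) / ((n : ℝ) + 2) = _
    rw [ih1, ih2, poch_succ (2*lam) (n+1), poch_succ (2*lam) n]
    have hne : ((n:ℝ) + 2) ≠ 0 := by positivity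
    have f1 : (n+2).factorial = (n+2) * ((n+1) * n.factorial) := rfl
    have f2 : (n+1).factorial = (n+1) * n.factorial := rfl
    rw [f1, f2]
    have h1 := fact_cast_pos n
    push_cast
    rw [div_eq_div_iff (by positivity) (by positivity)]
    field_simp
    ring

lemma gegenbauer_one_pos {lam : ℝ} (hlam : 0 < lam) (n : ℕ) :
    0 < gegenbauer lam n 1 := by
  rw [gegenbauer_one]
  exact div_pos (poch_pos (by linarith) n) (fact_cast_pos n)


open MvPolynomial

variable {D : ℕ}

/-- weight: product of factorials of the exponents -/
noncomputable def w (m : Fin D →₀ ℕ) : ℝ := ∏ i, ((m i).factorial : ℝ)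

lemma w_pos (m : Fin D →₀ ℕ) : 0 < w m :=
  Finset.prod_pos fun i _ => by exact_mod_cast (m i).factorial_pos

lemma w_add_single (m : Fin D →₀ ℕ) (i : Fin D) :
    w (m + Finsupp.single i 1) = ((m i : ℝ) + 1) * w m := by
  have key : ∀ j : Fin D, (m + Finsupp.single i 1 : Fin D →₀ ℕ) j
      = Function.update (fun j => m j) i (m i + 1) j := by
    intro j
    rcases eq_or_ne j i with rfl | hj
    · simp
    · rw [Function.update_of_ne hj]
      simp [Finsupp.single_eq_of_ne' (Ne.symm hj)]
  unfold w
  rw [Finset.prod_congr rfl (fun j _ => by rw [key j]),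
    ← Finset.mul_prod_erase _ _ (Finset.mem_univ i),
    ← Finset.mul_prod_erase _ (fun j => (((m j).factorial : ℝ))) (Finset.mem_univ i),
    Function.update_self, Nat.factorial_succ]
  have h2 : ∀ j ∈ Finset.univ.erase i,
      ((Nat.factorial (Function.update (fun j => m j) i (m i + 1) j) : ℝ))
        = ((m j).factorial : ℝ) := by
    intro j hj
    rw [Function.update_of_ne (Finset.mem_erase.1 hj).1]
  rw [Finset.prod_congr rfl h2]
  push_cast
  ring

/-- Fischer-type inner product -/
noncomputable def B (p q : MvPolynomial (Fin D) ℝ) : ℝ :=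
  ∑ m ∈ p.support, w m * p.coeff m * q.coeff m

lemma B_eq_sum {p q : MvPolynomial (Fin D) ℝ} {S : Finset (Fin D →₀ ℕ)}
    (h : p.support ⊆ S) :
    B p q = ∑ m ∈ S, w m * p.coeff m * q.coeff m := by
  refine Finset.sum_subset h fun m _ hm => ?_
  rw [MvPolynomial.notMem_support_iff.1 hm]
  ring

lemma B_symm (p q : MvPolynomial (Fin D) ℝ) : B p q = B q p := by
  rw [B_eq_sum (Finset.subset_union_left (s₂ := q.support)),
      B_eq_sum (Finset.subset_union_right (s₁ := p.support)) ]
  exact Finset.sum_congr rfl fun m _ => by ring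

lemma B_add_right (p q1 q2 : MvPolynomial (Fin D) ℝ) :
    B p (q1 + q2) = B p q1 + B p q2 := by
  unfold B
  rw [← Finset.sum_add_distrib]
  exact Finset.sum_congr rfl fun m _ => by rw [coeff_add]; ring

lemma B_smul_right (c : ℝ) (p q : MvPolynomial (Fin D) ℝ) :
    B p (c • q) = c * B p q := by
  unfold B
  rw [Finset.mul_sum]
  exact Finset.sum_congr rfl fun m _ => by rw [coeff_smul]; simp; ring

lemma B_zero_right (p : MvPolynomial (Fin D) ℝ) : B p 0 = 0 := by
  unfold B
  exact Finset.sum_eq_zero fun m _ => by simp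

lemma B_C_mul_right (c : ℝ) (p q : MvPolynomial (Fin D) ℝ) :
    B p (C c * q) = c * B p q := by
  rw [MvPolynomial.C_mul', B_smul_right]

lemma B_sum_right {ι : Type*} (s : Finset ι) (p : MvPolynomial (Fin D) ℝ)
    (f : ι → MvPolynomial (Fin D) ℝ) :
    B p (∑ i ∈ s, f i) = ∑ i ∈ s, B p (f i) := by
  classical
  induction s using Finset.induction_on with
  | empty => simp [B_zero_right]
  | insert _ _ h ih => rw [Finset.sum_insert h, Finset.sum_insert h, B_add_right, ih]

lemma B_sum_left {ι : Type*} (s : Finset ι) (p : MvPolynomial (Fin D) ℝ)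
    (f : ι → MvPolynomial (Fin D) ℝ) :
    B (∑ i ∈ s, f i) p = ∑ i ∈ s, B (f i) p := by
  rw [B_symm, B_sum_right]
  exact Finset.sum_congr rfl fun i _ => B_symm _ _

lemma B_smul_left (c : ℝ) (p q : MvPolynomial (Fin D) ℝ) :
    B (c • p) q = c * B p q := by
  rw [B_symm, B_smul_right, B_symm]

lemma B_C_mul_left (c : ℝ) (p q : MvPolynomial (Fin D) ℝ) :
    B (C c * p) q = c * B p q := by
  rw [B_symm, B_C_mul_right, B_symm]

lemma coeff_pderiv (i : Fin D) (q : MvPolynomial (Fin D) ℝ) (m : Fin D →₀ ℕ) :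
    coeff m (pderiv i q) = ((m i : ℝ) + 1) * coeff (m + Finsupp.single i 1) q := by
  induction q using MvPolynomial.induction_on' with
  | add p q ihp ihq =>
    rw [map_add, coeff_add, coeff_add, ihp, ihq]
    ring
  | monomial u c =>
    rw [pderiv_monomial, coeff_monomial, coeff_monomial]
    by_cases hu : u = m + Finsupp.single i 1
    · have hui : u i = m i + 1 := by
        rw [hu]
        show (m + Finsupp.single i 1 : Fin D →₀ ℕ) i = m i + 1
        simp
      have hum : u - Finsupp.single i 1 = m := by
        rw [hu]
        ext j
        rw [Finsupp.tsub_apply]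
        rcases eq_or_ne j i with rfl | hj
        · show (m + Finsupp.single j 1 : Fin D →₀ ℕ) j - _ = m j
          simp
        · show (m + Finsupp.single i 1 : Fin D →₀ ℕ) j - _ = m j
          simp [Finsupp.single_eq_of_ne' (Ne.symm hj)]
      rw [if_pos hum, if_pos hu, hui]
      push_cast
      ring
    · rw [if_neg hu]
      rcases eq_or_ne (u - Finsupp.single i 1) m with he | he
      · rw [if_pos he]
        have hui : u i = 0 := by
          by_contra h0
          apply hu
          ext j
          have hc : u j - (Finsupp.single i 1 : Fin D →₀ ℕ) j = m j := by
            rw [← Finsupp.tsub_apply, he]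
          show u j = (m + Finsupp.single i 1 : Fin D →₀ ℕ) j
          rcases eq_or_ne j i with rfl | hj
          · rw [Finsupp.single_eq_same] at hc
            rw [Finsupp.add_apply, Finsupp.single_eq_same]
            omega
          · rw [Finsupp.single_eq_of_ne' (Ne.symm hj)] at hc
            rw [Finsupp.add_apply, Finsupp.single_eq_of_ne' (Ne.symm hj)]
            omega
        rw [hui]
        push_cast
        ring
      · rw [if_neg he, mul_zero]

lemma B_X_mul (i : Fin D) (p q : MvPolynomial (Fin D) ℝ) :
    B (X i * p) q = B p (pderiv i q) := by
  have hsup : (X i * p).support = p.support.map (addLeftEmbedding (Finsupp.single i 1)) :=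
    support_X_mul i p
  unfold B
  rw [hsup, Finset.sum_map]
  apply Finset.sum_congr rfl
  intro m hm
  have h1 : addLeftEmbedding (Finsupp.single i 1) m = Finsupp.single i 1 + m := rfl
  rw [h1, coeff_X_mul, coeff_pderiv]
  rw [show Finsupp.single i 1 + m = m + Finsupp.single i 1 from add_comm _ _, w_add_single]
  ring
noncomputable def lin (x : Fin D → ℝ) : MvPolynomial (Fin D) ℝ :=
  ∑ i, MvPolynomial.C (x i) * X i

noncomputable def r2 : MvPolynomial (Fin D) ℝ := ∑ i : Fin D, X i * X i

noncomputable def Lap (p : MvPolynomial (Fin D) ℝ) : MvPolynomial (Fin D) ℝ :=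
  ∑ i, pderiv i (pderiv i p)

lemma Lap_add (p q : MvPolynomial (Fin D) ℝ) : Lap (p + q) = Lap p + Lap q := by
  unfold Lap
  rw [← Finset.sum_add_distrib]
  exact Finset.sum_congr rfl fun i _ => by rw [map_add, map_add]

lemma Lap_smul (c : ℝ) (p : MvPolynomial (Fin D) ℝ) : Lap (c • p) = c • Lap p := by
  unfold Lap
  rw [Finset.smul_sum]
  exact Finset.sum_congr rfl fun i _ => by rw [Derivation.map_smul, Derivation.map_smul]

lemma Lap_C_mul (c : ℝ) (p : MvPolynomial (Fin D) ℝ) : Lap (C c * p) = C c * Lap p := by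
  rw [MvPolynomial.C_mul', Lap_smul, MvPolynomial.C_mul']

lemma Lap_sum {ι : Type*} (s : Finset ι) (f : ι → MvPolynomial (Fin D) ℝ) :
    Lap (∑ i ∈ s, f i) = ∑ i ∈ s, Lap (f i) := by
  classical
  induction s using Finset.induction_on with
  | empty => simp [Lap]
  | insert _ _ h ih => rw [Finset.sum_insert h, Finset.sum_insert h, Lap_add, ih]

lemma B_r2_mul (p q : MvPolynomial (Fin D) ℝ) : B (r2 * p) q = B p (Lap q) := by
  unfold r2 Lap
  rw [Finset.sum_mul, B_sum_left, B_sum_right]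
  apply Finset.sum_congr rfl
  intro i _
  rw [mul_assoc, B_X_mul, B_X_mul]

lemma B_r2_pow_mul (k : ℕ) (p q : MvPolynomial (Fin D) ℝ) :
    B (r2 ^ k * p) q = B p (Lap^[k] q) := by
  induction k generalizing q with
  | zero => simp
  | succ k ih =>
    rw [pow_succ, mul_comm (r2^k) r2, mul_assoc, B_r2_mul, ih,
      Function.iterate_succ_apply]

lemma pderiv_lin (x : Fin D → ℝ) (i : Fin D) : pderiv i (lin x) = C (x i) := by
  unfold lin
  rw [map_sum]
  rw [Finset.sum_eq_single i]
  · rw [pderiv_C_mul, pderiv_X_self, mul_one]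
  · intro j _ hj
    rw [pderiv_C_mul, pderiv_X_of_ne hj, mul_zero]
  · intro h
    exact absurd (Finset.mem_univ i) h

lemma pderiv_r2 (i : Fin D) : pderiv i r2 = 2 * X i := by
  unfold r2
  rw [map_sum, Finset.sum_eq_single i]
  · rw [pderiv_mul, pderiv_X_self]
    ring
  · intro j _ hj
    rw [pderiv_mul, pderiv_X_of_ne hj]
    ring
  · intro h
    exact absurd (Finset.mem_univ i) h

lemma pderiv_lin_pow (x : Fin D → ℝ) (i : Fin D) (m : ℕ) :
    pderiv i ((lin x) ^ m) = C ((m : ℝ) * x i) * (lin x) ^ (m - 1) := by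
  rw [pderiv_pow, pderiv_lin, ← MvPolynomial.C_eq_coe_nat, map_mul]
  ring

lemma pderiv_r2_pow (i : Fin D) (k : ℕ) :
    pderiv i ((r2 : MvPolynomial (Fin D) ℝ) ^ k) = C (2 * (k:ℝ)) * (r2 ^ (k-1) * X i) := by
  rw [pderiv_pow, pderiv_r2, ← MvPolynomial.C_eq_coe_nat]
  rw [show ((2 : MvPolynomial (Fin D) ℝ)) = C (2 : ℝ) from (map_ofNat C 2).symm]
  rw [map_mul]
  ring

variable {D : ℕ}

lemma Lap_mul (f g : MvPolynomial (Fin D) ℝ) :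
    Lap (f * g) = Lap f * g + f * Lap g + ∑ i, C (2:ℝ) * (pderiv i f * pderiv i g) := by
  unfold Lap
  rw [Finset.sum_mul, Finset.mul_sum, ← Finset.sum_add_distrib, ← Finset.sum_add_distrib]
  apply Finset.sum_congr rfl
  intro i _
  rw [pderiv_mul, map_add, pderiv_mul, pderiv_mul]
  rw [show C (2:ℝ) = (2 : MvPolynomial (Fin D) ℝ) from map_ofNat C 2]
  ring

lemma Lap_one : Lap (1 : MvPolynomial (Fin D) ℝ) = 0 := by
  unfold Lap
  apply Finset.sum_eq_zero
  intro i _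
  rw [Derivation.map_one_eq_zero, map_zero]

lemma Lap_lin_pow (x : Fin D → ℝ) (m : ℕ) :
    Lap ((lin x) ^ m)
      = C ((m:ℝ) * ((m:ℝ) - 1) * (∑ i, x i * x i)) * (lin x) ^ (m - 2) := by
  match m with
  | 0 =>
    rw [pow_zero, Lap_one]
    norm_num
  | 1 =>
    unfold Lap
    rw [Finset.sum_eq_zero]
    · norm_num
    · intro i _
      rw [pow_one, pderiv_lin, pderiv_C]
  | (m+2) =>
    unfold Lap
    have step : ∀ i : Fin D, pderiv i (pderiv i ((lin x) ^ (m+2)))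
        = C (((m:ℝ)+2) * ((m:ℝ)+1) * (x i * x i)) * (lin x) ^ m := by
      intro i
      rw [pderiv_lin_pow, pderiv_C_mul, show (m+2-1) = m+1 from rfl, pderiv_lin_pow,
        show (m+1-1) = m from rfl, ← mul_assoc, ← map_mul]
      push_cast
      ring_nf
    rw [Finset.sum_congr rfl (fun i _ => step i), ← Finset.sum_mul, ← map_sum,
      ← Finset.mul_sum, Nat.add_sub_cancel]
    congr 2
    push_cast
    ring

lemma Lap_r2_pow (k : ℕ) :
    Lap ((r2 : MvPolynomial (Fin D) ℝ) ^ k)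
      = C ((2*(k:ℝ)) * (2*(k:ℝ) - 2 + (D:ℝ))) * r2 ^ (k - 1) := by
  match k with
  | 0 =>
    rw [pow_zero, Lap_one]
    norm_num
  | (k+1) =>
    unfold Lap
    have step : ∀ i : Fin D, pderiv i (pderiv i ((r2 : MvPolynomial (Fin D) ℝ) ^ (k+1)))
        = C (2*((k:ℝ)+1)) * (C (2*(k:ℝ)) * (r2 ^ (k-1) * (X i * X i)) + r2 ^ k) := by
      intro i
      rw [pderiv_r2_pow, pderiv_C_mul, Nat.add_sub_cancel, pderiv_mul, pderiv_r2_pow,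
        pderiv_X_self]
      push_cast
      ring
    rw [Finset.sum_congr rfl (fun i _ => step i), ← Finset.mul_sum]
    rw [Finset.sum_add_distrib, ← Finset.mul_sum, ← Finset.mul_sum]
    have hs : (∑ i : Fin D, (X i * X i) : MvPolynomial (Fin D) ℝ) = r2 := rfl
    rw [hs]
    rw [Finset.sum_const, Finset.card_univ, Fintype.card_fin, nsmul_eq_mul,
      ← MvPolynomial.C_eq_coe_nat]
    match k with
    | 0 =>
      rw [show (2*((0:ℕ):ℝ)) = 0 from by norm_num, map_zero, zero_mul, zero_add]
      rw [← mul_assoc, ← map_mul]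
      norm_num
    | (k'+1) =>
      rw [show (r2 : MvPolynomial (Fin D) ℝ)^(k'+1-1) * r2 = r2^(k'+1) from by
        rw [Nat.add_sub_cancel, pow_succ], Nat.add_sub_cancel]
      rw [← add_mul, ← map_add, ← mul_assoc, ← map_mul]
      congr 2
      push_cast
      ring

lemma Lap_T (x : Fin D → ℝ) (hx : ∑ i, x i * x i = 1) (M k : ℕ) :
    Lap ((lin x) ^ M * r2 ^ k)
      = C ((M:ℝ) * ((M:ℝ) - 1)) * ((lin x) ^ (M-2) * r2 ^ k)
        + C (2*(k:ℝ) * (2*(k:ℝ) - 2 + (D:ℝ)) + 4*(k:ℝ)*(M:ℝ)) * ((lin x) ^ M * r2 ^ (k-1)) := by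
  rw [Lap_mul, Lap_lin_pow, hx, Lap_r2_pow, mul_one]
  have cross : (∑ i, C (2:ℝ) * (pderiv i ((lin x)^M) * pderiv i ((r2 : MvPolynomial (Fin D) ℝ)^k)))
      = C (4*(k:ℝ)*(M:ℝ)) * ((lin x) ^ M * r2 ^ (k-1)) := by
    have e : ∀ i : Fin D, C (2:ℝ) * (pderiv i ((lin x)^M) * pderiv i ((r2 : MvPolynomial (Fin D) ℝ)^k))
        = C (4*(k:ℝ)*(M:ℝ)) * (((lin x) ^ (M-1) * r2 ^ (k-1)) * (C (x i) * X i)) := by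
      intro i
      rw [pderiv_lin_pow, pderiv_r2_pow]
      simp only [map_add, map_sub, map_mul, map_neg, map_natCast, map_ofNat, map_one]
      ring
    rw [Finset.sum_congr rfl (fun i _ => e i), ← Finset.mul_sum, ← Finset.mul_sum]
    have hlin : (∑ i, MvPolynomial.C (x i) * X i) = lin x := rfl
    rw [hlin]
    match M with
    | 0 =>
      norm_num
    | (M+1) =>
      rw [Nat.add_sub_cancel]
      simp only [map_add, map_sub, map_mul, map_neg, map_natCast, map_ofNat, map_one]
      ring
  rw [cross]
  simp only [map_add, map_sub, map_mul, map_neg, map_natCast, map_ofNat, map_one]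
  ring

/-- solid zonal harmonic -/
noncomputable def Z (lam : ℝ) (n : ℕ) (x : Fin D → ℝ) : MvPolynomial (Fin D) ℝ :=
  ∑ k ∈ Finset.range (n+1), a lam n k • ((lin x) ^ (n - 2*k) * r2 ^ k)

lemma harmKey (lam : ℝ) (hD : (D:ℝ) = 2*lam + 2) (n k : ℕ) :
    a lam n k * (((n-2*k : ℕ):ℝ) * (((n-2*k : ℕ):ℝ) - 1))
      + a lam n (k+1) * (2*((k+1:ℕ):ℝ) * (2*((k+1:ℕ):ℝ) - 2 + (D:ℝ))
          + 4*((k+1:ℕ):ℝ)*((n-2*(k+1) : ℕ):ℝ)) = 0 := by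
  rcases le_or_gt (2*(k+1)) n with hA | hA
  · obtain ⟨m, rfl⟩ : ∃ m, n = m + 2*(k+1) := ⟨n - 2*(k+1), by omega⟩
    have g1 : 2*k ≤ m + 2*(k+1) := by omega
    have g2 : 2*(k+1) ≤ m + 2*(k+1) := by omega
    have e1 : m + 2*(k+1) - 2*k = m + 2 := by omega
    have e2 : m + 2*(k+1) - k = m + k + 2 := by omega
    have e3 : m + 2*(k+1) - 2*(k+1) = m := by omega
    have e4 : m + 2*(k+1) - (k+1) = m + k + 1 := by omega
    simp only [a, if_pos g1, if_pos g2, e1, e2, e3, e4, hD]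
    rw [show m + k + 2 = (m + k + 1) + 1 from rfl, poch_succ]
    have f1 : (m+2).factorial = (m+2) * ((m+1) * m.factorial) := rfl
    have f2 : (k+1).factorial = (k+1) * k.factorial := rfl
    rw [f1, f2, pow_succ (-1:ℝ) k]
    have h1 := fact_cast_pos m
    have h2 := fact_cast_pos k
    push_cast
    field_simp
    ring
  · rcases le_or_gt (2*k) n with hB | hB
    · -- n = 2k or n = 2k+1
      have hz : a lam n (k+1) = 0 := a_of_gt (by omega)
      rw [hz, zero_mul, add_zero]
      rcases (by omega : n = 2*k ∨ n = 2*k+1) with rfl | rfl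
      · rw [show 2*k - 2*k = 0 from by omega]
        norm_num
      · rw [show 2*k+1 - 2*k = 1 from by omega]
        norm_num
    · have hz1 : a lam n k = 0 := a_of_gt hB
      have hz2 : a lam n (k+1) = 0 := a_of_gt (by omega)
      rw [hz1, hz2, zero_mul, zero_mul, add_zero]

lemma Lap_Z (lam : ℝ) (hD : (D:ℝ) = 2*lam + 2) (n : ℕ) (x : Fin D → ℝ)
    (hx : ∑ i, x i * x i = 1) :
    Lap (Z lam n x) = 0 := by
  unfold Z
  rw [Lap_sum]
  have eT : ∀ k, Lap (a lam n k • ((lin x) ^ (n - 2*k) * r2 ^ k))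
      = C (a lam n k * (((n-2*k : ℕ):ℝ) * (((n-2*k : ℕ):ℝ) - 1)))
          * ((lin x) ^ (n - 2*k - 2) * r2 ^ k)
        + C (a lam n k * (2*(k:ℝ) * (2*(k:ℝ) - 2 + (D:ℝ)) + 4*(k:ℝ)*((n-2*k : ℕ):ℝ)))
          * ((lin x) ^ (n - 2*k) * r2 ^ (k-1)) := by
    intro k
    rw [Lap_smul, Lap_T x hx, MvPolynomial.smul_eq_C_mul]
    simp only [map_add, map_sub, map_mul, map_neg, map_natCast, map_ofNat, map_one]
    ring
  rw [Finset.sum_congr rfl (fun k _ => eT k), Finset.sum_add_distrib]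
  -- second sum: shift index
  rw [Finset.sum_range_succ' (fun k => C (a lam n k * (2*(k:ℝ) * (2*(k:ℝ) - 2 + (D:ℝ))
      + 4*(k:ℝ)*((n-2*k : ℕ):ℝ))) * ((lin x) ^ (n - 2*k) * r2 ^ (k-1))) n]
  rw [show (C (a lam n 0 * (2*((0:ℕ):ℝ) * (2*((0:ℕ):ℝ) - 2 + (D:ℝ))
      + 4*((0:ℕ):ℝ)*((n-2*0 : ℕ):ℝ))) * ((lin x) ^ (n - 2*0) * r2 ^ (0-1))) = 0 from by
    norm_num]
  rw [add_zero]
  -- first sum: peel last term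
  rw [Finset.sum_range_succ (fun k => C (a lam n k * (((n-2*k : ℕ):ℝ) * (((n-2*k : ℕ):ℝ) - 1)))
      * ((lin x) ^ (n - 2*k - 2) * r2 ^ k)) n]
  have topzero : C (a lam n n * (((n-2*n : ℕ):ℝ) * (((n-2*n : ℕ):ℝ) - 1)))
      * ((lin x) ^ (n - 2*n - 2) * r2 ^ n) = 0 := by
    rcases Nat.eq_zero_or_pos n with rfl | hn
    · norm_num
    · rw [a_of_gt (by omega)]
      norm_num
  rw [topzero, add_zero, ← Finset.sum_add_distrib]
  apply Finset.sum_eq_zero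
  intro k _
  have hidx : n - 2*(k+1) = n - 2*k - 2 := by omega
  rw [hidx, show k+1-1 = k from rfl, ← add_mul, ← map_add]
  rw [show (a lam n k * (((n-2*k : ℕ):ℝ) * (((n-2*k : ℕ):ℝ) - 1))
      + a lam n (k+1) * (2*((k+1:ℕ):ℝ) * (2*((k+1:ℕ):ℝ) - 2 + (D:ℝ))
          + 4*((k+1:ℕ):ℝ)*((n-2*k-2 : ℕ):ℝ))) = 0 from by
    rw [← hidx]
    exact harmKey lam hD n k]
  norm_num

lemma desc_mul_fact : ∀ (n k : ℕ), k ≤ n → (n.descFactorial k) * (n-k).factorial = n.factorial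
  | n, 0, _ => by simp
  | n, (k+1), h => by
    rw [Nat.descFactorial_succ, mul_comm (n-k), mul_assoc]
    have h2 : (n - k).factorial = (n - k) * (n - (k+1)).factorial := by
      rw [show n - k = (n - (k+1)) + 1 from by omega]
      rfl
    rw [← h2, desc_mul_fact n k (by omega)]

lemma Lap_iter_lin_pow (y : Fin D → ℝ) (hy : ∑ i, y i * y i = 1) (n : ℕ) :
    ∀ k, 2*k ≤ n → Lap^[k] ((lin y)^n)
      = C ((n.descFactorial (2*k) : ℝ)) * (lin y) ^ (n - 2*k) := by
  intro k
  induction k with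
  | zero =>
    intro _
    norm_num
  | succ k ih =>
    intro h
    rw [Function.iterate_succ_apply', ih (by omega), Lap_C_mul, Lap_lin_pow, hy, mul_one,
      ← mul_assoc, ← map_mul]
    have e1 : n - 2*k - 2 = n - 2*(k+1) := by omega
    have e2 : ((n - 2*k : ℕ):ℝ) - 1 = ((n - 2*k - 1 : ℕ):ℝ) := by
      have : 1 ≤ n - 2*k := by omega
      push_cast [this]
      ring
    have e3 : n.descFactorial (2*(k+1)) = (n - 2*k - 1) * ((n - 2*k) * n.descFactorial (2*k)) := by
      rw [show 2*(k+1) = (2*k+1)+1 from by ring, Nat.descFactorial_succ, Nat.descFactorial_succ]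
      congr 1
    rw [e1, e2, e3]
    push_cast
    ring_nf

lemma B_one_one : B (1 : MvPolynomial (Fin D) ℝ) 1 = 1 := by
  have hsub : (1 : MvPolynomial (Fin D) ℝ).support ⊆ {0} := by
    intro m hm
    rw [MvPolynomial.mem_support_iff] at hm
    rw [Finset.mem_singleton]
    by_contra hne
    rw [MvPolynomial.coeff_one, if_neg (Ne.symm hne)] at hm
    exact hm rfl
  rw [B_eq_sum hsub, Finset.sum_singleton, MvPolynomial.coeff_zero_one]
  have : w (0 : Fin D →₀ ℕ) = 1 := by
    unfold w
    apply Finset.prod_eq_one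
    intro i _
    norm_num
  rw [this]
  ring

lemma B_lin_mul (x : Fin D → ℝ) (p q : MvPolynomial (Fin D) ℝ) :
    B (lin x * p) q = ∑ i, x i * B p (pderiv i q) := by
  unfold lin
  rw [Finset.sum_mul, B_sum_left]
  apply Finset.sum_congr rfl
  intro i _
  rw [mul_assoc, B_C_mul_left, B_X_mul]

lemma pair_pow (x y : Fin D → ℝ) :
    ∀ m : ℕ, B ((lin x)^m) ((lin y)^m) = (m.factorial : ℝ) * (∑ i, x i * y i)^m := by
  intro m
  induction m with
  | zero =>
    rw [pow_zero, pow_zero, pow_zero, B_one_one]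
    norm_num
  | succ m ih =>
    rw [pow_succ (lin x) m, mul_comm ((lin x)^m) (lin x), B_lin_mul]
    have e : ∀ i : Fin D, x i * B ((lin x)^m) (pderiv i ((lin y)^(m+1)))
        = (x i * y i) * (((m:ℝ)+1) * B ((lin x)^m) ((lin y)^m)) := by
      intro i
      rw [pderiv_lin_pow, Nat.add_sub_cancel, B_C_mul_right]
      push_cast
      ring
    rw [Finset.sum_congr rfl (fun i _ => e i), ← Finset.sum_mul, ih]
    rw [Nat.factorial_succ]
    push_cast
    ring

lemma B_Z_r2_mul (lam : ℝ) (hD : (D:ℝ) = 2*lam + 2) (n : ℕ) (x : Fin D → ℝ)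
    (hx : ∑ i, x i * x i = 1) (g : MvPolynomial (Fin D) ℝ) :
    B (Z lam n x) (r2 * g) = 0 := by
  rw [B_symm, B_r2_mul, Lap_Z lam hD n x hx, B_zero_right]

lemma B_Z_lin_pow (lam : ℝ) (n : ℕ) (x y : Fin D → ℝ)
    (hy : ∑ i, y i * y i = 1) :
    B (Z lam n x) ((lin y)^n)
      = (n.factorial : ℝ) * gegenbauer lam n (∑ i, x i * y i) := by
  unfold Z
  rw [B_sum_left]
  have e : ∀ k ∈ Finset.range (n+1),
      B (a lam n k • ((lin x) ^ (n - 2*k) * r2 ^ k)) ((lin y)^n)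
        = (n.factorial : ℝ) * (a lam n k * (∑ i, x i * y i) ^ (n - 2*k)) := by
    intro k _
    rw [B_smul_left]
    rcases le_or_gt (2*k) n with h | h
    · rw [mul_comm ((lin x) ^ (n - 2*k)) (r2 ^ k), B_r2_pow_mul,
        Lap_iter_lin_pow y hy n k h, B_C_mul_right, pair_pow]
      have : (n.descFactorial (2*k) : ℝ) * ((n - 2*k).factorial : ℝ) = (n.factorial : ℝ) := by
        rw [← Nat.cast_mul, desc_mul_fact n (2*k) h]
      calc a lam n k * ((n.descFactorial (2*k) : ℝ) * (((n - 2*k).factorial : ℝ)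
              * (∑ i, x i * y i) ^ (n - 2*k)))
          = ((n.descFactorial (2*k) : ℝ) * ((n - 2*k).factorial : ℝ))
              * (a lam n k * (∑ i, x i * y i) ^ (n - 2*k)) := by ring
        _ = _ := by rw [this]
    · rw [a_of_gt h, zero_mul]
      ring
  rw [Finset.sum_congr rfl e, ← Finset.mul_sum, gegenbauer_eq_sum]

lemma B_Z_Z (lam : ℝ) (hD : (D:ℝ) = 2*lam + 2) (n : ℕ) (x y : Fin D → ℝ)
    (hx : ∑ i, x i * x i = 1) (hy : ∑ i, y i * y i = 1) :
    B (Z lam n x) (Z lam n y)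
      = a lam n 0 * (n.factorial : ℝ) * gegenbauer lam n (∑ i, x i * y i) := by
  rw [show B (Z lam n x) (Z lam n y)
      = ∑ k ∈ Finset.range (n+1), a lam n k * B (Z lam n x) ((lin y) ^ (n - 2*k) * r2 ^ k) from by
    unfold Z
    rw [B_sum_right]
    exact Finset.sum_congr rfl fun k _ => B_smul_right _ _ _]
  rw [Finset.sum_range_succ' (fun k => a lam n k * B (Z lam n x) ((lin y) ^ (n - 2*k) * r2 ^ k)) n]
  have ezero : ∀ k ∈ Finset.range n,
      a lam n (k+1) * B (Z lam n x) ((lin y) ^ (n - 2*(k+1)) * r2 ^ (k+1)) = 0 := by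
    intro k _
    rw [show (lin y) ^ (n - 2*(k+1)) * r2 ^ (k+1) = r2 * ((lin y) ^ (n - 2*(k+1)) * r2 ^ k) from by
      rw [pow_succ]; ring]
    rw [B_Z_r2_mul lam hD n x hx, mul_zero]
  rw [Finset.sum_congr rfl ezero, Finset.sum_const, smul_zero, zero_add, Nat.mul_zero,
    Nat.sub_zero, pow_zero, mul_one, B_Z_lin_pow lam n x y hy]
  ring

lemma B_self_nonneg (p : MvPolynomial (Fin D) ℝ) : 0 ≤ B p p := by
  apply Finset.sum_nonneg
  intro m _
  have := w_pos (D := D) m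
  nlinarith [sq_nonneg (p.coeff m)]

lemma a_zero_pos {lam : ℝ} (hlam : 0 < lam) (n : ℕ) : 0 < a lam n 0 := by
  unfold a
  rw [if_pos (by omega)]
  simp only [pow_zero, one_mul, Nat.mul_zero, Nat.sub_zero, Nat.factorial_zero, Nat.cast_one]
  have := poch_pos hlam n
  have := fact_cast_pos n
  positivity

lemma B_add_left (p1 p2 q : MvPolynomial (Fin D) ℝ) :
    B (p1 + p2) q = B p1 q + B p2 q := by
  rw [B_symm, B_add_right, B_symm q p1, B_symm q p2]

lemma geg_bound {lam : ℝ} (hlam : 0 < lam) (hD : (D:ℝ) = 2*lam + 2) (n : ℕ)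
    (x y : Fin D → ℝ) (hx : ∑ i, x i * x i = 1) (hy : ∑ i, y i * y i = 1) :
    |gegenbauer lam n (∑ i, x i * y i)| ≤ gegenbauer lam n 1 := by
  have hpos : 0 < a lam n 0 * (n.factorial : ℝ) :=
    mul_pos (a_zero_pos hlam n) (fact_cast_pos n)
  have hxy : ∑ i, y i * x i = ∑ i, x i * y i :=
    Finset.sum_congr rfl fun i _ => mul_comm _ _
  have key : ∀ ε : ℝ, ε = 1 ∨ ε = -1 →
      0 ≤ gegenbauer lam n 1 + ε * gegenbauer lam n (∑ i, x i * y i) := by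
    intro ε hε
    have h0 : 0 ≤ B (Z lam n x + ε • Z lam n y) (Z lam n x + ε • Z lam n y) :=
      B_self_nonneg _
    have hexp : B (Z lam n x + ε • Z lam n y) (Z lam n x + ε • Z lam n y)
        = B (Z lam n x) (Z lam n x) + ε * B (Z lam n x) (Z lam n y)
          + (ε * B (Z lam n y) (Z lam n x) + ε * (ε * B (Z lam n y) (Z lam n y))) := by
      rw [B_add_left, B_add_right, B_add_right, B_smul_left, B_smul_left, B_smul_right,
        B_smul_right]
    rw [hexp, B_Z_Z lam hD n x x hx hx, B_Z_Z lam hD n x y hx hy,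
      B_Z_Z lam hD n y x hy hx, B_Z_Z lam hD n y y hy hy, hx, hy, hxy] at h0
    rcases hε with rfl | rfl
    · nlinarith [h0, hpos]
    · nlinarith [h0, hpos]
  have k1 := key 1 (Or.inl rfl)
  have k2 := key (-1) (Or.inr rfl)
  rw [abs_le]
  constructor <;> nlinarith [k1, k2]

lemma schur {N : ℕ} (P : Fin N → MvPolynomial (Fin D) ℝ) (M : Fin N → Fin N → ℝ)
    (hM : ∀ c : Fin N → ℝ, 0 ≤ ∑ i, ∑ j, c i * c j * M i j) (c : Fin N → ℝ) :
    0 ≤ ∑ i, ∑ j, c i * c j * (M i j * B (P i) (P j)) := by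
  classical
  set S := Finset.univ.biUnion (fun i : Fin N => (P i).support) with hS
  have hBS : ∀ i j : Fin N, B (P i) (P j) = ∑ m ∈ S, w m * (P i).coeff m * (P j).coeff m :=
    fun i j => B_eq_sum (fun m hm => Finset.mem_biUnion.2 ⟨i, Finset.mem_univ i, hm⟩)
  have expand : ∀ i j : Fin N, c i * c j * (M i j * B (P i) (P j))
      = ∑ m ∈ S, w m * ((c i * (P i).coeff m) * (c j * (P j).coeff m) * M i j) := by
    intro i j
    rw [hBS i j, Finset.mul_sum, Finset.mul_sum]
    exact Finset.sum_congr rfl fun m _ => by ring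
  have hMc : ∀ m : Fin D →₀ ℕ,
      0 ≤ ∑ i, ∑ j, (c i * (P i).coeff m) * (c j * (P j).coeff m) * M i j := by
    intro m
    have := hM (fun t => c t * (P t).coeff m)
    simpa using this
  calc (0:ℝ)
      ≤ ∑ m ∈ S, w m * (∑ i, ∑ j, (c i * (P i).coeff m) * (c j * (P j).coeff m) * M i j) :=
        Finset.sum_nonneg fun m _ => mul_nonneg (le_of_lt (w_pos m)) (hMc m)
    _ = ∑ i, ∑ j, ∑ m ∈ S, w m * ((c i * (P i).coeff m) * (c j * (P j).coeff m) * M i j) := by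
        simp_rw [Finset.mul_sum]
        rw [Finset.sum_comm]
        exact Finset.sum_congr rfl fun i _ => Finset.sum_comm
    _ = ∑ i, ∑ j, c i * c j * (M i j * B (P i) (P j)) :=
        Finset.sum_congr rfl fun i _ => Finset.sum_congr rfl fun j _ => (expand i j).symm

end Geg

theorem stmt9 (d d' : ℕ) (hd : 0 < d) (hd' : 2 ≤ d') (b : ℕ → ℝ → ℝ)
    (hbpd : ∀ (n N : ℕ) (u : Fin N → EuclideanSpace ℝ (Fin d)) (c : Fin N → ℝ),
      0 ≤ ∑ i, ∑ j, c i * c j * b n (dist (u i) (u j)))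
    (hb0 : ∀ n, 0 ≤ b n 0)
    (hsum : HasSum (fun n => b n 0) 1)
    (ψ : ℝ → ℝ → ℝ)
    (hψ : ∀ (x θ : ℝ), ψ x θ = ∑' n : ℕ,
      b n x * gegenbauer (((d' : ℝ) - 1) / 2) n (Real.cos θ) /
        gegenbauer (((d' : ℝ) - 1) / 2) n 1) :
    ψ 0 0 = 1 ∧
    ∀ (N : ℕ)
      (u : Fin N → EuclideanSpace ℝ (Fin d))
      (ξ : Fin N → Metric.sphere (0 : EuclideanSpace ℝ (Fin (d' + 1))) 1)
      (c : Fin N → ℝ),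
      0 ≤ ∑ i, ∑ j, c i * c j *
        ψ (dist (u i) (u j))
          (Real.arccos (⟪(ξ i : EuclideanSpace ℝ (Fin (d' + 1))),
            (ξ j : EuclideanSpace ℝ (Fin (d' + 1)))⟫ : ℝ)) := by
  have hd2 : (2:ℝ) ≤ (d':ℝ) := by exact_mod_cast hd'
  set lam := ((d' : ℝ) - 1) / 2 with hlamdef
  have hlam : 0 < lam := by rw [hlamdef]; linarith
  have hD : ((d' + 1 : ℕ) : ℝ) = 2 * lam + 2 := by
    rw [hlamdef]; push_cast; ring
  have hG1 : ∀ n, 0 < gegenbauer lam n 1 := Geg.gegenbauer_one_pos hlam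
  constructor
  · rw [hψ 0 0, Real.cos_zero]
    have he : ∀ n : ℕ, b n 0 * gegenbauer lam n 1 / gegenbauer lam n 1 = b n 0 := by
      intro n
      rw [mul_div_assoc, div_self (ne_of_gt (hG1 n)), mul_one]
    rw [tsum_congr he, hsum.tsum_eq]
  · intro N u ξ c
    set x : Fin N → (Fin (d' + 1) → ℝ) :=
      fun i => fun t => (ξ i : EuclideanSpace ℝ (Fin (d' + 1))) t with hxdef
    have hip : ∀ v w : EuclideanSpace ℝ (Fin (d' + 1)),
        (⟪v, w⟫ : ℝ) = ∑ t, v t * w t := by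
      intro v w
      rw [PiLp.inner_apply]
      simp [RCLike.inner_apply]
      exact Finset.sum_congr rfl fun _ _ => mul_comm _ _
    have hnorm : ∀ i, ‖(ξ i : EuclideanSpace ℝ (Fin (d' + 1)))‖ = 1 :=
      fun i => mem_sphere_zero_iff_norm.1 (ξ i).2
    have hunit : ∀ i, ∑ t, x i t * x i t = 1 := by
      intro i
      rw [← hip, real_inner_self_eq_norm_mul_norm, hnorm]
      norm_num
    have hinner_le : ∀ i j, |(⟪(ξ i : EuclideanSpace ℝ (Fin (d' + 1))),
        (ξ j : EuclideanSpace ℝ (Fin (d' + 1)))⟫ : ℝ)| ≤ 1 := by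
      intro i j
      have := abs_real_inner_le_norm (ξ i : EuclideanSpace ℝ (Fin (d' + 1)))
        (ξ j : EuclideanSpace ℝ (Fin (d' + 1)))
      rw [hnorm, hnorm] at this
      simpa using this
    -- the n-th summand
    set g : ℕ → Fin N → Fin N → ℝ := fun n i j =>
      b n (dist (u i) (u j)) * gegenbauer lam n (∑ t, x i t * x j t) /
        gegenbauer lam n 1 with hgdef
    have hψij : ∀ i j, ψ (dist (u i) (u j))
        (Real.arccos (⟪(ξ i : EuclideanSpace ℝ (Fin (d' + 1))),
          (ξ j : EuclideanSpace ℝ (Fin (d' + 1)))⟫ : ℝ)) = ∑' n, g n i j := by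
      intro i j
      rw [hψ, Real.cos_arccos (by linarith [abs_le.1 (hinner_le i j)])
        (by linarith [abs_le.1 (hinner_le i j)]), hip]
    have hb_bound : ∀ n i j, |b n (dist (u i) (u j))| ≤ b n 0 := by
      intro n i j
      have h1 := hbpd n 2 ![u i, u j] ![1, 1]
      have h2 := hbpd n 2 ![u i, u j] ![1, -1]
      simp [Fin.sum_univ_two, dist_self, dist_comm (u j) (u i)] at h1 h2
      rw [abs_le]
      constructor <;> linarith
    have hGb : ∀ n i j, |gegenbauer lam n (∑ t, x i t * x j t)| ≤ gegenbauer lam n 1 :=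
      fun n i j => Geg.geg_bound hlam hD n (x i) (x j) (hunit i) (hunit j)
    have hg_abs : ∀ n i j, |g n i j| ≤ b n 0 := by
      intro n i j
      rw [hgdef]
      calc |b n (dist (u i) (u j)) * gegenbauer lam n (∑ t, x i t * x j t) /
            gegenbauer lam n 1|
          = |b n (dist (u i) (u j))| * |gegenbauer lam n (∑ t, x i t * x j t)| /
            gegenbauer lam n 1 := by
            rw [abs_div, abs_mul, abs_of_pos (hG1 n)]
        _ ≤ b n 0 * gegenbauer lam n 1 / gegenbauer lam n 1 :=
            (div_le_div_iff_of_pos_right (hG1 n)).mpr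
              (mul_le_mul (hb_bound n i j) (hGb n i j) (abs_nonneg _) (hb0 n))
        _ = b n 0 := by rw [mul_div_assoc, div_self (ne_of_gt (hG1 n)), mul_one]
    have hsummable : ∀ i j, Summable (fun n => g n i j) := by
      intro i j
      exact Summable.of_abs (Summable.of_nonneg_of_le (fun n => abs_nonneg _)
        (fun n => hg_abs n i j) hsum.summable)
    have hterm : ∀ n, 0 ≤ ∑ i, ∑ j, c i * c j * g n i j := by
      intro n
      have hBv : ∀ i j, Geg.B (Geg.Z lam n (x i)) (Geg.Z lam n (x j))
          = Geg.a lam n 0 * (n.factorial : ℝ) * gegenbauer lam n (∑ t, x i t * x j t) :=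
        fun i j => Geg.B_Z_Z lam hD n (x i) (x j) (hunit i) (hunit j)
      have ha0 : 0 < Geg.a lam n 0 := Geg.a_zero_pos hlam n
      have hfac := Geg.fact_cast_pos n
      have hc : 0 < Geg.a lam n 0 * (n.factorial : ℝ) * gegenbauer lam n 1 :=
        mul_pos (mul_pos ha0 hfac) (hG1 n)
      have e : ∀ i : Fin N, ∀ j : Fin N, c i * c j * g n i j
          = (c i * c j * ((b n (dist (u i) (u j)))
              * Geg.B (Geg.Z lam n (x i)) (Geg.Z lam n (x j))))
            * (1 / (Geg.a lam n 0 * (n.factorial : ℝ) * gegenbauer lam n 1)) := by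
        intro i j
        have hne : gegenbauer lam n 1 ≠ 0 := ne_of_gt (hG1 n)
        have ha : Geg.a lam n 0 ≠ 0 := ne_of_gt ha0
        have hf : (n.factorial : ℝ) ≠ 0 := ne_of_gt hfac
        rw [hgdef, hBv i j]
        field_simp
      calc (0:ℝ) ≤ (∑ i, ∑ j, c i * c j * ((b n (dist (u i) (u j)))
              * Geg.B (Geg.Z lam n (x i)) (Geg.Z lam n (x j))))
            * (1 / (Geg.a lam n 0 * (n.factorial : ℝ) * gegenbauer lam n 1)) := by
            apply mul_nonneg
            · exact Geg.schur (fun i => Geg.Z lam n (x i))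
                (fun i j => b n (dist (u i) (u j))) (fun c' => hbpd n N u c') c
            · exact le_of_lt (one_div_pos.mpr hc)
        _ = ∑ i, ∑ j, c i * c j * g n i j := by
            rw [Finset.sum_mul]
            apply Finset.sum_congr rfl
            intro i _
            rw [Finset.sum_mul]
            apply Finset.sum_congr rfl
            intro j _
            exact (e i j).symm
    calc (0:ℝ) ≤ ∑' n, ∑ i, ∑ j, c i * c j * g n i j :=
          tsum_nonneg hterm
      _ = ∑ i, ∑' n, ∑ j, c i * c j * g n i j := by
          apply Summable.tsum_finsetSum
          intro i _
          apply summable_sum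
          intro j _
          exact (hsummable i j).mul_left _
      _ = ∑ i, ∑ j, ∑' n, c i * c j * g n i j := by
          apply Finset.sum_congr rfl
          intro i _
          apply Summable.tsum_finsetSum
          intro j _
          exact (hsummable i j).mul_left _
      _ = ∑ i, ∑ j, c i * c j *
            ψ (dist (u i) (u j))
              (Real.arccos (⟪(ξ i : EuclideanSpace ℝ (Fin (d' + 1))),
                (ξ j : EuclideanSpace ℝ (Fin (d' + 1)))⟫ : ℝ)) := by
          apply Finset.sum_congr rfl
          intro i _
          apply Finset.sum_congr rfl
          intro j _
          rw [hψij i j, tsum_mul_left]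
end

section
/- For d ≥ 2 and 0 < α ≤ 2, the turning bands image of x ↦ 1 − αx on [0,1) is x ↦ 1 − (Γ(d/2)/(√π Γ((d+1)/2)))·α·x. That is, (2Γ(d/2))/(√π Γ((d−1)/2)) · (1/x) ∫₀ˣ (1 − αu)(1 − u²/x²)^{(d−3)/2} du = 1 − (Γ(d/2)/(√π Γ((d+1)/2)))·α·x for all x ∈ (0,1). -/
open Real MeasureTheory intervalIntegral

lemma realBeta {a b : ℝ} (ha : 0 < a) (hb : 0 < b) :
    ∫ t in (0:ℝ)..1, t ^ (a-1) * (1-t) ^ (b-1)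
      = Real.Gamma a * Real.Gamma b / Real.Gamma (a+b) := by
  have key : Complex.Gamma a * Complex.Gamma b
      = Complex.Gamma ((a:ℂ)+b) * Complex.betaIntegral a b :=
    Complex.Gamma_mul_Gamma_eq_betaIntegral (by simpa using ha) (by simpa using hb)
  have hβ : Complex.betaIntegral a b
      = ((∫ t in (0:ℝ)..1, t ^ (a-1) * (1-t) ^ (b-1) : ℝ) : ℂ) := by
    rw [Complex.betaIntegral, ← intervalIntegral.integral_ofReal]
    apply intervalIntegral.integral_congr
    intro t ht
    rw [Set.uIcc_of_le (by norm_num : (0:ℝ) ≤ 1)] at ht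
    rw [show ((a:ℂ)-1) = ((a-1:ℝ):ℂ) by push_cast; ring,
      show ((b:ℂ)-1) = ((b-1:ℝ):ℂ) by push_cast; ring,
      ]
    simp only []
    rw [show ((1:ℂ)-(t:ℂ)) = ((1-t:ℝ):ℂ) by push_cast; ring,
      ← Complex.ofReal_cpow ht.1, ← Complex.ofReal_cpow (by linarith [ht.2] : (0:ℝ) ≤ 1 - t),
      ← Complex.ofReal_mul]
  rw [hβ, show ((a:ℂ)+b) = ((a+b:ℝ):ℂ) by push_cast; ring] at key
  rw [Complex.Gamma_ofReal, Complex.Gamma_ofReal, Complex.Gamma_ofReal, ← Complex.ofReal_mul,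
    ← Complex.ofReal_mul] at key
  have key' := Complex.ofReal_inj.mp key
  have h0 : Real.Gamma (a+b) ≠ 0 := (Real.Gamma_pos_of_pos (by linarith)).ne'
  field_simp
  linarith [key']

lemma sq_image : (fun t : ℝ => t^2) '' Set.Ioo 0 1 = Set.Ioo 0 1 := by
  ext y
  simp only [Set.mem_image, Set.mem_Ioo]
  constructor
  · rintro ⟨t, ⟨h0, h1⟩, rfl⟩
    exact ⟨by positivity, by nlinarith⟩
  · rintro ⟨h0, h1⟩
    exact ⟨Real.sqrt y, ⟨Real.sqrt_pos.mpr h0,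
      (Real.sqrt_lt' one_pos).mpr (by nlinarith)⟩, Real.sq_sqrt h0.le⟩

lemma subst_sq (g : ℝ → ℝ) :
    ∫ u in Set.Ioo (0:ℝ) 1, g u = ∫ t in Set.Ioo (0:ℝ) 1, 2*t * g (t^2) := by
  have hd : ∀ t ∈ Set.Ioo (0:ℝ) 1,
      HasDerivWithinAt (fun t : ℝ => t^2) (2*t) (Set.Ioo 0 1) t := by
    intro t ht
    simpa using (hasDerivAt_pow 2 t).hasDerivWithinAt
  have hinj : Set.InjOn (fun t : ℝ => t^2) (Set.Ioo 0 1) := by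
    intro p hp q hq h
    simp only at h
    have h2 : (p - q) * (p + q) = 0 := by linear_combination h
    rcases mul_eq_zero.mp h2 with h3 | h3
    · linarith
    · exfalso; simp only [Set.mem_Ioo] at hp hq; linarith [hp.1, hq.1]
  have := integral_image_eq_integral_abs_deriv_smul measurableSet_Ioo hd hinj g
  rw [sq_image] at this
  rw [this]
  apply setIntegral_congr_fun measurableSet_Ioo
  intro t ht
  simp only [Set.mem_Ioo] at ht
  simp only [smul_eq_mul]
  rw [abs_of_pos (by linarith : (0:ℝ) < 2*t)]

lemma intInt (p : ℝ) (hp : -1 < p) :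
    IntervalIntegrable (fun s : ℝ => (1-s^2) ^ p) volume 0 1 := by
  have h1 : IntervalIntegrable (fun s : ℝ => (1-s) ^ p) volume 0 1 := by
    have := (intervalIntegrable_rpow' hp (a := 0) (b := 1)).comp_sub_left 1
    simpa using this.symm
  have h2 : IntervalIntegrable (fun s : ℝ => (1-s) ^ p * (1+s) ^ p) volume 0 1 := by
    apply h1.mul_continuousOn
    apply ContinuousOn.rpow_const (by fun_prop)
    intro s hs
    rw [Set.uIcc_of_le (by norm_num : (0:ℝ) ≤ 1)] at hs
    left
    have := hs.1
    intro h
    linarith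
  rw [intervalIntegrable_iff_integrableOn_Ioc_of_le (by norm_num : (0:ℝ) ≤ 1)] at h2 ⊢
  apply h2.congr_fun ?_ measurableSet_Ioc
  intro s hs
  simp only [Set.mem_Ioc] at hs
  simp only []
  rw [← Real.mul_rpow (by linarith) (by linarith)]
  ring_nf

lemma I1val (p : ℝ) (hp : -1 < p) :
    ∫ s in (0:ℝ)..1, s * (1-s^2)^p = 1/(2*(p+1)) := by
  have hb : ∫ t in (0:ℝ)..1, (1-t)^p = 1/(p+1) := by
    have e : ∫ t in (0:ℝ)..1, (1-t)^p = ∫ t in (0:ℝ)..1, t^((1:ℝ)-1) * ((1-t)^((p+1)-1)) :=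
      intervalIntegral.integral_congr (fun t ht => by norm_num)
    rw [e, realBeta one_pos (by linarith), show (1:ℝ)+(p+1) = (p+1)+1 by ring,
      Real.Gamma_add_one (by linarith : p+1 ≠ 0), Real.Gamma_one]
    have hΓ : Real.Gamma (p+1) ≠ 0 := (Real.Gamma_pos_of_pos (by linarith)).ne'
    rw [one_mul, mul_comm (p+1) (Real.Gamma (p+1)), ← div_div, div_self hΓ]
  have key := subst_sq (fun u => (1-u)^p / 2)
  have h1 : ∫ t in Set.Ioo (0:ℝ) 1, 2*t*((1-t^2)^p/2) = ∫ t in Set.Ioo (0:ℝ) 1, t*(1-t^2)^p := by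
    apply setIntegral_congr_fun measurableSet_Ioo
    intro t ht
    ring
  rw [h1] at key
  rw [intervalIntegral.integral_of_le zero_le_one, integral_Ioc_eq_integral_Ioo, ← key]
  have h2 : ∫ u in Set.Ioo (0:ℝ) 1, (1-u)^p/2 = (∫ u in (0:ℝ)..1, (1-u)^p)/2 := by
    rw [intervalIntegral.integral_of_le zero_le_one, integral_Ioc_eq_integral_Ioo,
      ← MeasureTheory.integral_div]
  rw [h2, hb]
  rw [show (2:ℝ)*(p+1) = (p+1)*2 by ring, ← div_div]

lemma I0val (p : ℝ) (hp : -1 < p) :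
    ∫ s in (0:ℝ)..1, (1-s^2)^p
      = Real.sqrt π * Real.Gamma (p+1) / (2 * Real.Gamma (p+3/2)) := by
  have hb : ∫ t in (0:ℝ)..1, t ^ (-(1:ℝ)/2) * (1-t)^p
      = Real.sqrt π * Real.Gamma (p+1) / Real.Gamma (p+3/2) := by
    have e : ∫ t in (0:ℝ)..1, t ^ (-(1:ℝ)/2) * (1-t)^p
        = ∫ t in (0:ℝ)..1, t^((1/2:ℝ)-1) * ((1-t)^((p+1)-1)) :=
      intervalIntegral.integral_congr (fun t ht => by norm_num)
    rw [e, realBeta (by norm_num) (by linarith : (0:ℝ) < p+1),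
      show (1/2:ℝ) + (p+1) = p+3/2 by ring, Real.Gamma_one_half_eq]
  have key := subst_sq (fun u => u ^ (-(1:ℝ)/2) * (1-u)^p / 2)
  have h1 : ∫ t in Set.Ioo (0:ℝ) 1, 2*t*((t^2) ^ (-(1:ℝ)/2) * (1-t^2)^p / 2)
      = ∫ t in Set.Ioo (0:ℝ) 1, (1-t^2)^p := by
    apply setIntegral_congr_fun measurableSet_Ioo
    intro t ht
    simp only [Set.mem_Ioo] at ht
    have ht0 : (0:ℝ) < t := ht.1
    have h3 : (t^2 : ℝ) ^ (-(1:ℝ)/2) = t⁻¹ := by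
      rw [← Real.rpow_natCast t 2, ← Real.rpow_mul ht0.le]
      norm_num [Real.rpow_neg_one]
    show 2*t*((t^2) ^ (-(1:ℝ)/2) * (1-t^2)^p / 2) = (1-t^2)^p
    rw [h3]
    field_simp
  rw [h1] at key
  rw [intervalIntegral.integral_of_le zero_le_one, integral_Ioc_eq_integral_Ioo, ← key]
  have h2 : ∫ u in Set.Ioo (0:ℝ) 1, u ^ (-(1:ℝ)/2) * (1-u)^p / 2
      = (∫ u in (0:ℝ)..1, u ^ (-(1:ℝ)/2) * (1-u)^p)/2 := by
    rw [intervalIntegral.integral_of_le zero_le_one, integral_Ioc_eq_integral_Ioo,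
      ← MeasureTheory.integral_div]
  rw [h2, hb]
  rw [div_div, mul_comm (Real.Gamma (p+3/2)) 2]

theorem stmt15 (d : ℕ) (hd : 2 ≤ d) (α : ℝ) (hα : 0 < α) (hα2 : α ≤ 2)
    (x : ℝ) (hx : x ∈ Set.Ioo (0 : ℝ) 1) :
    2 * Real.Gamma ((d : ℝ) / 2) /
      (Real.sqrt π * Real.Gamma (((d : ℝ) - 1) / 2)) * (1 / x) *
      ∫ u in (0 : ℝ)..x, (1 - α * u) * (1 - u ^ 2 / x ^ 2) ^ (((d : ℝ) - 3) / 2) =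
    1 - Real.Gamma ((d : ℝ) / 2) /
      (Real.sqrt π * Real.Gamma (((d : ℝ) + 1) / 2)) * α * x := by
  obtain ⟨hx0, hx1⟩ := hx
  have hd2 : (2:ℝ) ≤ (d:ℝ) := by exact_mod_cast hd
  set P : ℝ := ((d:ℝ)-3)/2 with hP
  have hPm : -1 < P := by rw [hP]; linarith
  -- substitution u = s * x
  have hxne : x ≠ 0 := hx0.ne'
  have hsub : (∫ u in (0:ℝ)..x, (1 - α * u) * (1 - u ^ 2 / x ^ 2) ^ P)
      = x * ∫ s in (0:ℝ)..1, (1 - α * x * s) * (1 - s ^ 2) ^ P := by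
    have h := intervalIntegral.integral_comp_mul_right
      (fun u => (1 - α * u) * (1 - u ^ 2 / x ^ 2) ^ P) (hxne) (a := 0) (b := 1)
    simp only [zero_mul, one_mul, smul_eq_mul] at h
    have hfg : ∀ s : ℝ, (1 - α*(s*x)) * (1 - (s*x)^2/x^2)^P = (1 - α*x*s) * (1-s^2)^P := by
      intro s
      rw [show ((s*x)^2/x^2 : ℝ) = s^2 by field_simp, show α*(s*x) = α*x*s by ring]
    calc ∫ u in (0:ℝ)..x, (1 - α * u) * (1 - u ^ 2 / x ^ 2) ^ P
        = x * (x⁻¹ * ∫ u in (0:ℝ)..x, (1 - α * u) * (1 - u ^ 2 / x ^ 2) ^ P) := by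
          field_simp
      _ = x * ∫ s in (0:ℝ)..1, (1 - α*(s*x)) * (1 - (s*x)^2/x^2)^P := by rw [← h]
      _ = x * ∫ s in (0:ℝ)..1, (1 - α*x*s) * (1-s^2)^P := by
          congr 1
          exact intervalIntegral.integral_congr fun s _ => hfg s
  -- split the integral
  have hI : IntervalIntegrable (fun s : ℝ => (1-s^2) ^ P) volume 0 1 := intInt P hPm
  have hI2 : IntervalIntegrable (fun s : ℝ => s * (1-s^2) ^ P) volume 0 1 :=
    hI.continuousOn_mul continuousOn_id
  have hsplit : (∫ s in (0:ℝ)..1, (1 - α * x * s) * (1 - s ^ 2) ^ P)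
      = (∫ s in (0:ℝ)..1, (1-s^2) ^ P) - α * x * ∫ s in (0:ℝ)..1, s * (1-s^2) ^ P := by
    rw [← intervalIntegral.integral_const_mul, ← intervalIntegral.integral_sub hI
      (hI2.const_mul (α*x))]
    exact intervalIntegral.integral_congr fun s _ => by ring
  have hv0 := I0val P hPm
  have hv1 := I1val P hPm
  have eP1 : P + 1 = ((d:ℝ)-1)/2 := by rw [hP]; ring
  have eP2 : P + 3/2 = (d:ℝ)/2 := by rw [hP]; ring
  rw [eP1, eP2] at hv0
  rw [eP1] at hv1
  have hΓ1 : 0 < Real.Gamma (((d:ℝ)-1)/2) := Real.Gamma_pos_of_pos (by linarith)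
  have hΓ2 : 0 < Real.Gamma ((d:ℝ)/2) := Real.Gamma_pos_of_pos (by linarith)
  have hπ : (0:ℝ) < Real.sqrt π := Real.sqrt_pos.mpr Real.pi_pos
  have hΓ3 : Real.Gamma (((d:ℝ)+1)/2) = (((d:ℝ)-1)/2) * Real.Gamma (((d:ℝ)-1)/2) := by
    rw [show ((d:ℝ)+1)/2 = ((d:ℝ)-1)/2 + 1 by ring,
      Real.Gamma_add_one (by intro h; rw [div_eq_zero_iff] at h; rcases h with h | h <;> linarith)]
  rw [hsub, hsplit, hv0, hv1, hΓ3]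
  have hdne : (d:ℝ) - 1 ≠ 0 := by intro h; linarith
  field_simp
end

section
/- Let X be a set equipped with a metric dist, and let α be a real function such that the kernel a(s,t) = α(dist(s,t)) on X × X is positive definite, with a(s,s) = α(0) ≤ 1 for all s ∈ X. Define φ(x, s, t) for x ∈ [0,2) by φ(x,s,t) = 1 + ∑_{n=1}^∞ (4·a(s,t)/(π²(2n−1)²)) cos((2n−1)πx). Then for any points (x₁,s₁),…,(x_N,s_N) ∈ ℝ × X and real coefficients c₁,…,c_N, ∑_{i,j} c_i c_j φ(|x_i − x_j|, s_i, s_j) ≥ 0, i.e. the kernel ((x,s),(y,t)) ↦ φ(|x − y|, s, t) is positive definite on ℝ × X. -/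
open Real

theorem stmt16 {X : Type*} (a : X → X → ℝ)
    (hapd : ∀ (N : ℕ) (s : Fin N → X) (c : Fin N → ℝ),
      0 ≤ ∑ i, ∑ j, c i * c j * a (s i) (s j))
    (hdiag : ∀ s : X, a s s ≤ 1)
    (φ : ℝ → X → X → ℝ)
    (hφ : ∀ (x : ℝ) (s t : X), φ x s t =
      1 + ∑' n : ℕ, (4 * a s t / (π ^ 2 * (2 * (n : ℝ) + 1) ^ 2)) *
        Real.cos ((2 * (n : ℝ) + 1) * π * x)) :
    ∀ (N : ℕ) (x : Fin N → ℝ) (s : Fin N → X) (c : Fin N → ℝ),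
      0 ≤ ∑ i, ∑ j, c i * c j * φ |x i - x j| (s i) (s j) := by
  intro N x s c
  have hπ := Real.pi_pos
  set f : ℕ → Fin N → Fin N → ℝ := fun n i j =>
    (4 * a (s i) (s j) / (π ^ 2 * (2 * (n : ℝ) + 1) ^ 2)) *
      Real.cos ((2 * (n : ℝ) + 1) * π * |x i - x j|) with hf
  have hsumm : ∀ i j, Summable (fun n => f n i j) := by
    intro i j
    apply Summable.of_norm
    have hb : Summable (fun n : ℕ => 4 * |a (s i) (s j)| / π ^ 2 * (1 / ((n : ℝ) + 1) ^ 2)) := by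
      apply Summable.mul_left
      have : Summable (fun n : ℕ => 1 / (n : ℝ) ^ 2) :=
        Real.summable_one_div_nat_pow.mpr one_lt_two
      have := (summable_nat_add_iff 1).mpr this
      simpa using this
    apply hb.of_nonneg_of_le (fun n => norm_nonneg _)
    intro n
    have hn0 : (0 : ℝ) ≤ (n : ℝ) := Nat.cast_nonneg n
    have hd : (0 : ℝ) < π ^ 2 * (2 * (n : ℝ) + 1) ^ 2 := by positivity
    have hc : |Real.cos ((2 * (n : ℝ) + 1) * π * |x i - x j|)| ≤ 1 :=
      Real.abs_cos_le_one _
    rw [Real.norm_eq_abs, abs_mul, abs_div, abs_of_pos hd]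
    have h1 : |4 * a (s i) (s j)| = 4 * |a (s i) (s j)| := by
      rw [abs_mul]; norm_num
    rw [h1]
    have h2 : ((n : ℝ) + 1) ^ 2 ≤ (2 * (n : ℝ) + 1) ^ 2 := by nlinarith
    calc 4 * |a (s i) (s j)| / (π ^ 2 * (2 * (n : ℝ) + 1) ^ 2) *
          |Real.cos ((2 * (n : ℝ) + 1) * π * |x i - x j|)|
        ≤ 4 * |a (s i) (s j)| / (π ^ 2 * (2 * (n : ℝ) + 1) ^ 2) * 1 := by
          apply mul_le_mul_of_nonneg_left hc; positivity
      _ ≤ 4 * |a (s i) (s j)| / (π ^ 2 * ((n : ℝ) + 1) ^ 2) := by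
          rw [mul_one]
          apply div_le_div_of_nonneg_left (by positivity) (by positivity)
          nlinarith
      _ = 4 * |a (s i) (s j)| / π ^ 2 * (1 / ((n : ℝ) + 1) ^ 2) := by
          field_simp
  simp only [hφ]
  simp_rw [mul_add, mul_one, ← tsum_mul_left]
  rw [show (∑ i, ∑ j, (c i * c j + ∑' n, c i * c j * f n i j)) =
      (∑ i, ∑ j, c i * c j) + ∑ i, ∑ j, ∑' n, c i * c j * f n i j by
    rw [← Finset.sum_add_distrib]
    exact Finset.sum_congr rfl fun i _ => by rw [← Finset.sum_add_distrib]]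
  have hg : ∀ i j, Summable (fun n => c i * c j * f n i j) :=
    fun i j => (hsumm i j).mul_left _
  have hswap : ∑ i, ∑ j, ∑' n, c i * c j * f n i j
      = ∑' n, ∑ i, ∑ j, c i * c j * f n i j := by
    rw [Summable.tsum_finsetSum (fun i _ => summable_sum (fun j _ => hg i j))]
    exact Finset.sum_congr rfl fun i _ => (Summable.tsum_finsetSum fun j _ => hg i j).symm
  rw [hswap]
  have h1 : (0 : ℝ) ≤ ∑ i, ∑ j, c i * c j := by
    rw [← Finset.sum_mul_sum]
    exact mul_self_nonneg _
  have h2 : (0 : ℝ) ≤ ∑' n, ∑ i, ∑ j, c i * c j * f n i j := by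
    apply tsum_nonneg
    intro n
    have hcos : ∀ i j : Fin N, Real.cos ((2 * (n : ℝ) + 1) * π * |x i - x j|)
        = Real.cos ((2 * (n : ℝ) + 1) * π * x i) * Real.cos ((2 * (n : ℝ) + 1) * π * x j)
        + Real.sin ((2 * (n : ℝ) + 1) * π * x i) * Real.sin ((2 * (n : ℝ) + 1) * π * x j) := by
      intro i j
      have hk : (0 : ℝ) ≤ (2 * (n : ℝ) + 1) * π := by positivity
      rw [show (2 * (n : ℝ) + 1) * π * |x i - x j|
          = |(2 * (n : ℝ) + 1) * π * (x i - x j)| by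
        rw [abs_mul, abs_of_nonneg hk]]
      rw [Real.cos_abs, mul_sub, Real.cos_sub]
    have key : ∑ i, ∑ j, c i * c j * f n i j
        = (4 / (π ^ 2 * (2 * (n : ℝ) + 1) ^ 2)) *
          ((∑ i, ∑ j, (c i * Real.cos ((2 * (n : ℝ) + 1) * π * x i)) *
              (c j * Real.cos ((2 * (n : ℝ) + 1) * π * x j)) * a (s i) (s j))
          + (∑ i, ∑ j, (c i * Real.sin ((2 * (n : ℝ) + 1) * π * x i)) *
              (c j * Real.sin ((2 * (n : ℝ) + 1) * π * x j)) * a (s i) (s j))) := by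
      simp_rw [hf, hcos]
      rw [mul_add, Finset.mul_sum, Finset.mul_sum, ← Finset.sum_add_distrib]
      refine Finset.sum_congr rfl fun i _ => ?_
      rw [Finset.mul_sum, Finset.mul_sum, ← Finset.sum_add_distrib]
      refine Finset.sum_congr rfl fun j _ => ?_
      ring
    rw [key]
    have hA := hapd N s (fun i => c i * Real.cos ((2 * (n : ℝ) + 1) * π * x i))
    have hB := hapd N s (fun i => c i * Real.sin ((2 * (n : ℝ) + 1) * π * x i))
    have hD : (0 : ℝ) ≤ 4 / (π ^ 2 * (2 * (n : ℝ) + 1) ^ 2) := by positivity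
    exact mul_nonneg hD (add_nonneg hA hB)
  linarith
end

section
/- With p(t) = exp(−t²/5) and h̄(x,t) = ∑_{k=0}^∞ p(t)^k cos(2πkx)/(k!·e), the kernel ((x,s),(y,t)) ↦ h̄(x−y, |s−t|) is positive definite on (ℝ × ℝ)²: for all points (x₁,s₁),…,(x_N,s_N) and real coefficients c₁,…,c_N, ∑_{i,j} c_i c_j h̄(x_i−x_j, |s_i−s_j|) ≥ 0. -/
open Real

lemma hexp_tsum (x : ℝ) : Real.exp x = ∑' n : ℕ, x ^ n / n.factorial := by
  rw [Real.exp_eq_exp_ℝ, NormedSpace.exp_eq_tsum_div]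

lemma aux_pd (N : ℕ) (d θ s : Fin N → ℝ) (β : ℝ) (hβ : 0 ≤ β) :
    0 ≤ ∑ i, ∑ j, d i * d j * Real.exp (β * (s i * s j)) * Real.cos (θ i - θ j) := by
  classical
  set a : ℕ → Fin N → ℝ := fun m i => d i * s i ^ m * Real.cos (θ i) with ha
  set b : ℕ → Fin N → ℝ := fun m i => d i * s i ^ m * Real.sin (θ i) with hb
  have hterm : ∀ i j : Fin N,
      d i * d j * Real.exp (β * (s i * s j)) * Real.cos (θ i - θ j)
        = ∑' m : ℕ, (β ^ m / m.factorial) * (a m i * a m j + b m i * b m j) := by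
    intro i j
    rw [hexp_tsum, Real.cos_sub]
    rw [show d i * d j * (∑' m : ℕ, (β * (s i * s j)) ^ m / m.factorial) *
          (Real.cos (θ i) * Real.cos (θ j) + Real.sin (θ i) * Real.sin (θ j))
        = ∑' m : ℕ, d i * d j * ((β * (s i * s j)) ^ m / m.factorial) *
          (Real.cos (θ i) * Real.cos (θ j) + Real.sin (θ i) * Real.sin (θ j)) from by
      rw [← tsum_mul_left, ← tsum_mul_right]]
    congr 1; funext m
    simp only [ha, hb, mul_pow]
    ring
  have hsummable : ∀ i j : Fin N,
      Summable (fun m : ℕ => (β ^ m / m.factorial) * (a m i * a m j + b m i * b m j)) := by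
    intro i j
    apply Summable.congr ((Real.summable_pow_div_factorial (β * (s i * s j))).mul_right
      (d i * d j * (Real.cos (θ i) * Real.cos (θ j) + Real.sin (θ i) * Real.sin (θ j))))
    intro m
    simp only [ha, hb, mul_pow]
    ring
  have hsq : ∀ m : ℕ, (∑ i, a m i) ^ 2 + (∑ i, b m i) ^ 2
      = ∑ i, ∑ j, (a m i * a m j + b m i * b m j) := by
    intro m
    rw [sq, sq, Finset.sum_mul_sum, Finset.sum_mul_sum, ← Finset.sum_add_distrib]
    exact Finset.sum_congr rfl fun i _ => Finset.sum_add_distrib.symm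
  calc (0:ℝ) ≤ ∑' m : ℕ, (β ^ m / m.factorial) *
        ((∑ i, a m i) ^ 2 + (∑ i, b m i) ^ 2) := by
        refine tsum_nonneg fun m => mul_nonneg (div_nonneg (pow_nonneg hβ m)
          (Nat.cast_nonneg _)) (by positivity)
    _ = ∑' m : ℕ, ∑ i, ∑ j, (β ^ m / m.factorial) * (a m i * a m j + b m i * b m j) := by
        congr 1; funext m
        rw [hsq m, Finset.mul_sum]
        exact Finset.sum_congr rfl fun i _ => Finset.mul_sum _ _ _
    _ = ∑ i, ∑' m : ℕ, ∑ j, (β ^ m / (m.factorial : ℝ)) * (a m i * a m j + b m i * b m j) :=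
        (Summable.tsum_finsetSum (s := Finset.univ) (f := fun (i : Fin N) (m : ℕ) =>
          ∑ j, (β ^ m / (m.factorial : ℝ)) * (a m i * a m j + b m i * b m j))
          (fun i _ => summable_sum (fun j _ => hsummable i j)))
    _ = ∑ i, ∑ j, d i * d j * Real.exp (β * (s i * s j)) * Real.cos (θ i - θ j) := by
        refine Finset.sum_congr rfl fun i _ => ?_
        rw [(Summable.tsum_finsetSum (s := Finset.univ) (f := fun (j : Fin N) (m : ℕ) =>
          (β ^ m / (m.factorial : ℝ)) * (a m i * a m j + b m i * b m j))
          (fun j _ => hsummable i j))]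
        exact Finset.sum_congr rfl fun j _ => (hterm i j).symm

theorem stmt18 (p : ℝ → ℝ) (hp : ∀ t : ℝ, p t = Real.exp (-t ^ 2 / 5))
    (hbar : ℝ → ℝ → ℝ)
    (hdef : ∀ (x t : ℝ), hbar x t =
      ∑' k : ℕ, p t ^ k * Real.cos (2 * π * (k : ℝ) * x) /
        ((k.factorial : ℝ) * Real.exp 1)) :
    ∀ (N : ℕ) (x s : Fin N → ℝ) (c : Fin N → ℝ),
      0 ≤ ∑ i, ∑ j, c i * c j * hbar (x i - x j) |s i - s j| := by
  intro N x s c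
  classical
  set T : ℕ → Fin N → Fin N → ℝ := fun k i j =>
    c i * c j * (p |s i - s j| ^ k * Real.cos (2 * π * (k : ℝ) * (x i - x j)) /
      ((k.factorial : ℝ) * Real.exp 1)) with hT
  have hp01 : ∀ t : ℝ, 0 ≤ p t ∧ p t ≤ 1 := by
    intro t
    rw [hp]
    constructor
    · exact (Real.exp_pos _).le
    · rw [← Real.exp_zero]
      exact Real.exp_le_exp.mpr (by nlinarith [sq_nonneg t])
  have hsumm : ∀ i j : Fin N, Summable (fun k : ℕ => T k i j) := by
    intro i j
    have h1 : Summable (fun k : ℕ =>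
        |c i * c j| * (1 / ((k.factorial : ℝ) * Real.exp 1))) := by
      have := (Real.summable_pow_div_factorial 1).mul_left
        (|c i * c j| * (1 / Real.exp 1))
      refine this.congr fun k => ?_
      rw [one_pow]
      ring
    refine Summable.of_norm_bounded h1 fun k => ?_
    have hpos : (0:ℝ) < (k.factorial : ℝ) * Real.exp 1 := by positivity
    rw [hT]
    simp only [Real.norm_eq_abs, abs_mul, abs_div, abs_of_pos hpos]
    refine mul_le_mul_of_nonneg_left ?_ (by rw [← abs_mul]; exact abs_nonneg _)
    rw [div_le_div_iff₀ hpos hpos]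
    refine mul_le_mul_of_nonneg_right ?_ hpos.le
    rw [abs_pow, abs_of_nonneg (hp01 _).1]
    calc p |s i - s j| ^ k * |Real.cos (2 * π * (k:ℝ) * (x i - x j))|
        ≤ 1 ^ k * 1 := by
          exact mul_le_mul (pow_le_pow_left₀ (hp01 _).1 (hp01 _).2 k)
            (Real.abs_cos_le_one _) (abs_nonneg _) (by norm_num)
      _ = 1 := by norm_num
  have hDk : ∀ k : ℕ, 0 ≤ ∑ i, ∑ j, T k i j := by
    intro k
    set d : Fin N → ℝ := fun i => c i * Real.exp (-(k:ℝ) * (s i) ^ 2 / 5) with hd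
    set θ : Fin N → ℝ := fun i => 2 * π * (k:ℝ) * x i with hθ
    have hrw : ∀ i j : Fin N, T k i j = (1 / ((k.factorial : ℝ) * Real.exp 1)) *
        (d i * d j * Real.exp ((2 * (k:ℝ) / 5) * (s i * s j)) * Real.cos (θ i - θ j)) := by
      intro i j
      rw [hT]
      simp only [hd, hθ, hp]
      rw [show Real.cos (2 * π * (k:ℝ) * (x i - x j))
          = Real.cos (2 * π * (k:ℝ) * x i - 2 * π * (k:ℝ) * x j) from by congr 1; ring]
      rw [show Real.exp (-|s i - s j| ^ 2 / 5) ^ k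
          = Real.exp (-(k:ℝ) * (s i) ^ 2 / 5) * Real.exp (-(k:ℝ) * (s j) ^ 2 / 5) *
            Real.exp ((2 * (k:ℝ) / 5) * (s i * s j)) from by
        rw [← Real.exp_nat_mul, ← Real.exp_add, ← Real.exp_add]
        congr 1
        rw [sq_abs]
        ring]
      ring
    calc (0:ℝ) ≤ (1 / ((k.factorial : ℝ) * Real.exp 1)) *
          ∑ i, ∑ j, d i * d j * Real.exp ((2 * (k:ℝ) / 5) * (s i * s j)) *
            Real.cos (θ i - θ j) := by
          exact mul_nonneg (by positivity) (aux_pd N d θ s (2 * (k:ℝ) / 5) (by positivity))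
      _ = ∑ i, ∑ j, T k i j := by
          rw [Finset.mul_sum]
          exact Finset.sum_congr rfl fun i _ => by
            rw [Finset.mul_sum]
            exact Finset.sum_congr rfl fun j _ => (hrw i j).symm
  have key : ∑ i, ∑ j, c i * c j * hbar (x i - x j) |s i - s j|
      = ∑' k : ℕ, ∑ i, ∑ j, T k i j := by
    calc ∑ i, ∑ j, c i * c j * hbar (x i - x j) |s i - s j|
        = ∑ i, ∑ j, ∑' k : ℕ, T k i j := by
          refine Finset.sum_congr rfl fun i _ => Finset.sum_congr rfl fun j _ => ?_
          rw [hdef, ← tsum_mul_left]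
      _ = ∑ i, ∑' k : ℕ, ∑ j, T k i j := Finset.sum_congr rfl fun i _ =>
          (Summable.tsum_finsetSum (s := Finset.univ) (f := fun (j : Fin N) (k : ℕ) => T k i j)
            (fun j _ => hsumm i j)).symm
      _ = ∑' k : ℕ, ∑ i, ∑ j, T k i j :=
          (Summable.tsum_finsetSum (s := Finset.univ) (f := fun (i : Fin N) (k : ℕ) => ∑ j, T k i j)
            (fun i _ => summable_sum (fun j _ => hsumm i j))).symm
  rw [key]
  exact tsum_nonneg hDk
end
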